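/- arXiv:1906.07256 — 3 statements merged into one kernel-verified Lean document; each statement's English description precedes it below -/
import Mathlib

section
/- Let ω ∈ (0,1) be irrational and satisfy the Diophantine condition DC(T)_γ for some γ > 0, let α ∈ (0,1], and let φ : T → ℝ be α-Hölder continuous. Then there is an absolute constant C such that for all integers N ≥ 2, the Birkhoff sums of φ over the translation T_ω x = x + ω satisfy sup_{x∈T} |(1/N) φ^{(N)}(x) − ∫_T φ| ≤ C · (1/γ) · log(1/γ) · ‖φ‖_α · (log N)^{3α} / N^α. -/
open scoped BigOperators

noncomputable section

def nint (t : ℝ) : ℝ := |t - round t|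

def distT (x y : ℝ) : ℝ := nint (x - y)

def birkhoff (φ : ℝ → ℝ) (ω : ℝ) (N : ℕ) (x : ℝ) : ℝ :=
  ∑ j ∈ Finset.range N, φ (x + (j : ℝ) * ω)

def supNorm (φ : ℝ → ℝ) : ℝ := sSup {r : ℝ | ∃ x : ℝ, r = |φ x|}

def holderSemi (α : ℝ) (φ : ℝ → ℝ) : ℝ :=
  sSup {r : ℝ | ∃ x y : ℝ, distT x y ≠ 0 ∧ r = |φ x - φ y| / distT x y ^ α}

def holderNorm (α : ℝ) (φ : ℝ → ℝ) : ℝ := supNorm φ + holderSemi α φ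

def IsHolderT (α : ℝ) (φ : ℝ → ℝ) : Prop :=
  ∃ C : ℝ, ∀ x y : ℝ, |φ x - φ y| ≤ C * distT x y ^ α

def DiophCond (γ ω : ℝ) : Prop :=
  ∀ k : ℤ, k ≠ 0 → nint ((k : ℝ) * ω) ≥ γ / (|(k : ℝ)| * Real.log (|(k : ℝ)| + 1) ^ 2)

namespace Stmt0

/-! ### nint lemmas -/

lemma nint_nonneg (t : ℝ) : 0 ≤ nint t := abs_nonneg _

lemma nint_le_int (t : ℝ) (m : ℤ) : nint t ≤ |t - m| := round_le t m

lemma nint_le_abs (t : ℝ) : nint t ≤ |t| := by simpa using nint_le_int t 0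

lemma nint_le_half (t : ℝ) : nint t ≤ 1 / 2 := abs_sub_round t

lemma nint_add_int (t : ℝ) (m : ℤ) : nint (t + m) = nint t := by
  unfold nint
  rw [round_add_intCast]
  push_cast
  ring_nf

lemma nint_int_add (t : ℝ) (m : ℤ) : nint ((m : ℝ) + t) = nint t := by
  rw [add_comm, nint_add_int]

lemma nint_add_le (a b : ℝ) : nint (a + b) ≤ nint a + nint b := by
  calc nint (a + b) ≤ |a + b - ((round a + round b : ℤ) : ℝ)| := nint_le_int _ _
    _ = |(a - round a) + (b - round b)| := by push_cast; ring_nf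
    _ ≤ |a - round a| + |b - round b| := abs_add_le _ _
    _ = nint a + nint b := rfl

lemma nint_eq_zero {t : ℝ} (h : nint t = 0) : ∃ m : ℤ, t = (m : ℝ) := by
  refine ⟨round t, ?_⟩
  have := abs_eq_zero.mp h
  linarith [sub_eq_zero.mp this]

lemma distT_nonneg (x y : ℝ) : 0 ≤ distT x y := nint_nonneg _

/-! ### Hölder observable lemmas -/

lemma holderSemi_nonneg (α : ℝ) (φ : ℝ → ℝ) : 0 ≤ holderSemi α φ := by
  apply Real.sSup_nonneg
  rintro r ⟨x, y, hd, rfl⟩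
  have h1 : 0 < distT x y := lt_of_le_of_ne (distT_nonneg x y) (Ne.symm hd)
  have h2 : 0 < distT x y ^ α := Real.rpow_pos_of_pos h1 α
  positivity

lemma supNorm_nonneg (φ : ℝ → ℝ) : 0 ≤ supNorm φ := by
  apply Real.sSup_nonneg
  rintro r ⟨x, rfl⟩
  exact abs_nonneg _

lemma holderSemi_le_holderNorm (α : ℝ) (φ : ℝ → ℝ) : holderSemi α φ ≤ holderNorm α φ := by
  have := supNorm_nonneg φ
  unfold holderNorm; linarith

lemma holder_bound {α : ℝ} {φ : ℝ → ℝ} (hα : α ∈ Set.Ioc (0:ℝ) 1)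
    (hper : Function.Periodic φ 1) (hHol : IsHolderT α φ) (x y : ℝ) :
    |φ x - φ y| ≤ holderSemi α φ * distT x y ^ α := by
  by_cases hd : distT x y = 0
  · obtain ⟨m, hm⟩ := nint_eq_zero hd
    have hxy : x = y + (m : ℝ) * 1 := by rw [mul_one]; linarith
    have : φ x = φ y := by rw [hxy, (hper.int_mul m) y]
    rw [this, hd, sub_self, abs_zero,
      Real.zero_rpow (ne_of_gt hα.1), mul_zero]
  · obtain ⟨C, hC⟩ := hHol
    have hdp : 0 < distT x y := lt_of_le_of_ne (distT_nonneg x y) (Ne.symm hd)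
    have hdpa : 0 < distT x y ^ α := Real.rpow_pos_of_pos hdp α
    have hBdd : BddAbove {r : ℝ | ∃ x y : ℝ, distT x y ≠ 0 ∧ r = |φ x - φ y| / distT x y ^ α} := by
      refine ⟨C, ?_⟩
      rintro r ⟨u, v, hd', rfl⟩
      have hdp' : 0 < distT u v := lt_of_le_of_ne (distT_nonneg u v) (Ne.symm hd')
      have hdpa' : 0 < distT u v ^ α := Real.rpow_pos_of_pos hdp' α
      rw [div_le_iff₀ hdpa']
      exact hC u v
    have hmem : |φ x - φ y| / distT x y ^ α ∈
        {r : ℝ | ∃ x y : ℝ, distT x y ≠ 0 ∧ r = |φ x - φ y| / distT x y ^ α} :=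
      ⟨x, y, hd, rfl⟩
    have := le_csSup hBdd hmem
    rw [div_le_iff₀ hdpa] at this
    exact this

lemma holder_bound_abs {α : ℝ} {φ : ℝ → ℝ} (hα : α ∈ Set.Ioc (0:ℝ) 1)
    (hper : Function.Periodic φ 1) (hHol : IsHolderT α φ) (x y : ℝ) :
    |φ x - φ y| ≤ holderSemi α φ * |x - y| ^ α := by
  refine le_trans (holder_bound hα hper hHol x y) ?_
  apply mul_le_mul_of_nonneg_left _ (holderSemi_nonneg α φ)
  exact Real.rpow_le_rpow (distT_nonneg x y) (nint_le_abs _) (le_of_lt hα.1)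

lemma holder_continuous {α : ℝ} {φ : ℝ → ℝ} (hα : α ∈ Set.Ioc (0:ℝ) 1)
    (hper : Function.Periodic φ 1) (hHol : IsHolderT α φ) : Continuous φ := by
  set H := holderSemi α φ with hH
  have hH0 : 0 ≤ H := holderSemi_nonneg α φ
  rw [Metric.continuous_iff]
  intro b ε hε
  refine ⟨(ε / (H + 1)) ^ (1/α), Real.rpow_pos_of_pos (by positivity) _, fun a ha => ?_⟩
  have h1 : |φ a - φ b| ≤ H * |a - b| ^ α := holder_bound_abs hα hper hHol a b
  have h2 : |a - b| ^ α ≤ ((ε / (H + 1)) ^ (1/α)) ^ α := by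
    apply Real.rpow_le_rpow (abs_nonneg _) _ (le_of_lt hα.1)
    rw [Real.dist_eq] at ha
    exact le_of_lt ha
  have h3 : ((ε / (H + 1)) ^ (1/α)) ^ α = ε / (H + 1) := by
    rw [← Real.rpow_mul (by positivity), one_div_mul_cancel (ne_of_gt hα.1), Real.rpow_one]
  rw [Real.dist_eq]
  have h4 : H * ((ε / (H + 1)) ^ (1/α)) ^ α < ε := by
    rw [h3]
    have : H / (H+1) < 1 := by
      rw [div_lt_one (by positivity)]; linarith
    calc H * (ε / (H+1)) = (H / (H+1)) * ε := by ring
      _ < 1 * ε := by apply mul_lt_mul_of_pos_right this hε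
      _ = ε := one_mul ε
  calc |φ a - φ b| ≤ H * |a - b| ^ α := h1
    _ ≤ H * ((ε / (H + 1)) ^ (1/α)) ^ α := by
        exact mul_le_mul_of_nonneg_left h2 hH0
    _ < ε := h4

/-! ### Continued fractions via the Gauss map -/

def gx (ω : ℝ) : ℕ → ℝ := fun n => (fun y : ℝ => Int.fract y⁻¹)^[n] ω

def ga (ω : ℝ) (n : ℕ) : ℕ := (⌊(gx ω n)⁻¹⌋).toNat

def gpq (ω : ℝ) : ℕ → ℕ × ℕ
  | 0 => (1, 0)
  | 1 => (0, 1)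
  | (n+2) => (ga ω n * (gpq ω (n+1)).1 + (gpq ω n).1,
              ga ω n * (gpq ω (n+1)).2 + (gpq ω n).2)

def ps (ω : ℝ) (n : ℕ) : ℕ := (gpq ω n).1
def qs (ω : ℝ) (n : ℕ) : ℕ := (gpq ω n).2

lemma ps_zero (ω : ℝ) : ps ω 0 = 1 := rfl
lemma ps_one (ω : ℝ) : ps ω 1 = 0 := rfl
lemma qs_zero (ω : ℝ) : qs ω 0 = 0 := rfl
lemma qs_one (ω : ℝ) : qs ω 1 = 1 := rfl
lemma ps_rec (ω : ℝ) (n : ℕ) : ps ω (n+2) = ga ω n * ps ω (n+1) + ps ω n := rfl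
lemma qs_rec (ω : ℝ) (n : ℕ) : qs ω (n+2) = ga ω n * qs ω (n+1) + qs ω n := rfl

lemma gx_zero (ω : ℝ) : gx ω 0 = ω := rfl
lemma gx_succ (ω : ℝ) (n : ℕ) : gx ω (n+1) = Int.fract (gx ω n)⁻¹ := by
  unfold gx
  rw [Function.iterate_succ_apply']

/-- signed error `Bf n = qs n * ω - ps n`; `Bf 0 = -1`, `Bf 1 = ω`. -/
noncomputable def Bf (ω : ℝ) (n : ℕ) : ℝ := (qs ω n : ℝ) * ω - (ps ω n : ℝ)

lemma Bf_zero (ω : ℝ) : Bf ω 0 = -1 := by unfold Bf; rw [qs_zero, ps_zero]; norm_num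
lemma Bf_one (ω : ℝ) : Bf ω 1 = ω := by unfold Bf; rw [qs_one, ps_one]; norm_num

lemma Bf_rec (ω : ℝ) (n : ℕ) : Bf ω (n+2) = (ga ω n : ℝ) * Bf ω (n+1) + Bf ω n := by
  unfold Bf
  rw [qs_rec, ps_rec]
  push_cast
  ring

noncomputable def Pr (ω : ℝ) (n : ℕ) : ℝ := ∏ i ∈ Finset.range (n+1), gx ω i

lemma Pr_succ (ω : ℝ) (n : ℕ) : Pr ω (n+1) = Pr ω n * gx ω (n+1) := Finset.prod_range_succ _ _

lemma det_rec (ω : ℝ) : ∀ n : ℕ,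
    (qs ω n : ℤ) * (ps ω (n+1) : ℤ) - (qs ω (n+1) : ℤ) * (ps ω n : ℤ) = -(-1)^n := by
  intro n
  induction n with
  | zero => rw [qs_zero, ps_zero, qs_one, ps_one]; norm_num
  | succ k ih =>
    rw [qs_rec, ps_rec]
    push_cast
    linear_combination (-1 : ℤ) * ih

lemma ps_qs_coprime (ω : ℝ) (n : ℕ) : Nat.Coprime (ps ω (n+1)) (qs ω (n+1)) := by
  have h := det_rec ω n
  have hsq : ((-1:ℤ)^n) * ((-1:ℤ)^n) = 1 := by
    rw [← pow_add]
    exact (neg_one_pow_eq_one_iff_even (by norm_num)).mpr (Even.add_self n)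
  have hco : IsCoprime ((ps ω (n+1) : ℤ)) ((qs ω (n+1) : ℤ)) := by
    refine ⟨-(-1)^n * (qs ω n : ℤ), (-1)^n * (ps ω n : ℤ), ?_⟩
    linear_combination (-(-1:ℤ)^n) * h + hsq
  have := Int.isCoprime_iff_gcd_eq_one.mp hco
  rwa [Int.gcd_natCast_natCast] at this

section CF
variable {ω : ℝ} (hirr : Irrational ω) (hω : ω ∈ Set.Ioo (0:ℝ) 1)

include hirr hω

lemma gx_prop : ∀ n, Irrational (gx ω n) ∧ gx ω n ∈ Set.Ioo (0:ℝ) 1 := by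
  intro n
  induction n with
  | zero => exact ⟨hirr, hω⟩
  | succ k ih =>
    obtain ⟨hi, h0, h1⟩ := ih
    have hne : gx ω k ≠ 0 := ne_of_gt h0
    have hinv : Irrational (gx ω k)⁻¹ := by
      rw [Irrational] at *
      intro ⟨r, hr⟩
      apply hi
      refine ⟨r⁻¹, ?_⟩
      rw [Rat.cast_inv, hr, inv_inv]
    have hfr : Irrational (Int.fract (gx ω k)⁻¹) :=
      Irrational.sub_intCast hinv ⌊(gx ω k)⁻¹⌋
    constructor
    · rwa [gx_succ]
    · rw [gx_succ]
      refine ⟨?_, Int.fract_lt_one _⟩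
      rcases lt_or_eq_of_le (Int.fract_nonneg (gx ω k)⁻¹) with h | h
      · exact h
      · exfalso; exact hfr.ne_int 0 (by rw [← h]; norm_num)

lemma ga_pos (n : ℕ) : 1 ≤ ga ω n := by
  obtain ⟨_, h0, h1⟩ := gx_prop hirr hω n
  have h2 : (1:ℝ) ≤ (gx ω n)⁻¹ := by
    rw [le_inv_comm₀ (by norm_num) h0]; linarith
  have h3 : (1:ℤ) ≤ ⌊(gx ω n)⁻¹⌋ := by
    rw [Int.le_floor]; exact_mod_cast h2
  unfold ga; omega

lemma gx_inv_eq (n : ℕ) : (gx ω n)⁻¹ = (ga ω n : ℝ) + gx ω (n+1) := by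
  have hfl : (0:ℤ) ≤ ⌊(gx ω n)⁻¹⌋ := by
    have := ga_pos hirr hω n
    unfold ga at this
    omega
  have hcast : (ga ω n : ℝ) = ((⌊(gx ω n)⁻¹⌋ : ℤ) : ℝ) := by
    unfold ga
    exact_mod_cast congrArg (fun z : ℤ => (z : ℝ)) (Int.toNat_of_nonneg hfl)
  rw [hcast, gx_succ]
  unfold Int.fract
  ring

lemma Pr_pos (n : ℕ) : 0 < Pr ω n := by
  apply Finset.prod_pos
  intro i _
  exact (gx_prop hirr hω i).2.1

lemma Bf_prod : ∀ n, Bf ω (n+1) = (-1)^n * Pr ω n := by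
  have key : ∀ n, Bf ω (n+1) = (-1)^n * Pr ω n ∧ Bf ω (n+2) = (-1)^(n+1) * Pr ω (n+1) := by
    intro n
    induction n with
    | zero =>
      constructor
      · rw [Bf_one]
        unfold Pr
        rw [Finset.prod_range_one, gx_zero]
        ring
      · have h1 := gx_inv_eq hirr hω 0
        have h0 : gx ω 0 ≠ 0 := ne_of_gt (gx_prop hirr hω 0).2.1
        have h2 : (1:ℝ) = gx ω 0 * ((ga ω 0 : ℝ) + gx ω 1) := by
          rw [← h1, mul_inv_cancel₀ h0]
        have hPr : Pr ω 1 = Pr ω 0 * gx ω 1 := Pr_succ ω 0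
        have hPr0 : Pr ω 0 = gx ω 0 := by
          unfold Pr; rw [Finset.prod_range_one]
        rw [Bf_rec, Bf_one, Bf_zero, hPr, hPr0, gx_zero]
        rw [gx_zero] at h2
        linear_combination -h2
    | succ k ih =>
      obtain ⟨ih1, ih2⟩ := ih
      refine ⟨ih2, ?_⟩
      have h1 := gx_inv_eq hirr hω (k+1)
      have h0 : gx ω (k+1) ≠ 0 := ne_of_gt (gx_prop hirr hω (k+1)).2.1
      have h2 : (1:ℝ) = gx ω (k+1) * ((ga ω (k+1) : ℝ) + gx ω (k+2)) := by
        rw [← h1, mul_inv_cancel₀ h0]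
      have hp2 : Pr ω (k+2) = Pr ω (k+1) * gx ω (k+2) := Pr_succ ω (k+1)
      have hp1 : Pr ω (k+1) = Pr ω k * gx ω (k+1) := Pr_succ ω k
      rw [Bf_rec, ih2, ih1, hp2, hp1]
      linear_combination ((-1:ℝ)^k * Pr ω k) * h2
  exact fun n => (key n).1

lemma Bf_abs (n : ℕ) : |Bf ω (n+1)| = Pr ω n := by
  rw [Bf_prod hirr hω n, abs_mul, abs_pow, abs_neg, abs_one, one_pow, one_mul,
    abs_of_pos (Pr_pos hirr hω n)]

lemma qs_ge_one : ∀ n, 1 ≤ qs ω (n+1) := by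
  have key : ∀ n, 1 ≤ qs ω (n+1) ∧ 1 ≤ qs ω (n+2) := by
    intro n
    induction n with
    | zero =>
      constructor
      · rw [qs_one]
      · rw [qs_rec, qs_one, qs_zero]
        have := ga_pos hirr hω 0
        nlinarith
    | succ k ih =>
      refine ⟨ih.2, ?_⟩
      rw [qs_rec]
      have := ga_pos hirr hω (k+1)
      nlinarith [ih.1, ih.2]
  exact fun n => (key n).1

lemma qs_mono_succ (n : ℕ) : qs ω (n+1) ≤ qs ω (n+2) := by
  rw [qs_rec]
  have := ga_pos hirr hω n
  nlinarith [qs_ge_one hirr hω n]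

lemma Q_mono : Monotone (fun n => qs ω (n+1)) := by
  apply monotone_nat_of_le_succ
  intro n
  exact qs_mono_succ hirr hω n

lemma Q_growth (n : ℕ) : 2 * qs ω (n+1) ≤ qs ω (n+3) := by
  have h1 : qs ω (n+3) = ga ω (n+1) * qs ω (n+2) + qs ω (n+1) := qs_rec ω (n+1)
  have h2 := ga_pos hirr hω (n+1)
  have h3 := qs_mono_succ hirr hω n
  nlinarith

lemma Q_pow (k : ℕ) : 2 ^ k ≤ qs ω (2*k+1) := by
  induction k with
  | zero => simp [qs_one]
  | succ m ih =>
    have h1 : 2*(m+1)+1 = (2*m+1) + 2 := by ring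
    rw [h1]
    calc 2^(m+1) = 2 * 2^m := by ring
      _ ≤ 2 * qs ω (2*m+1) := by omega
      _ ≤ qs ω (2*m+3) := Q_growth hirr hω (2*m)
      _ = qs ω ((2*m+1)+2) := by ring_nf

/-- key approximation identity: `qs (n+2) * Pr n + qs (n+1) * Pr (n+1) = 1`. -/
lemma qs_Pr_identity (n : ℕ) :
    (qs ω (n+2) : ℝ) * Pr ω n + (qs ω (n+1) : ℝ) * Pr ω (n+1) = 1 := by
  have hdet := det_rec ω (n+1)
  have h2 : (qs ω (n+1) : ℝ) * (ps ω (n+2) : ℝ) - (qs ω (n+2) : ℝ) * (ps ω (n+1) : ℝ) =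
      -(-1:ℝ)^(n+1) := by exact_mod_cast hdet
  have h1 : (qs ω (n+2) : ℝ) * Bf ω (n+1) - (qs ω (n+1) : ℝ) * Bf ω (n+2) =
      ((qs ω (n+1) : ℝ) * (ps ω (n+2) : ℝ) - (qs ω (n+2) : ℝ) * (ps ω (n+1) : ℝ)) := by
    unfold Bf; ring
  rw [Bf_prod hirr hω n, Bf_prod hirr hω (n+1), h2] at h1
  have h4 : (-1:ℝ)^n * ((-1:ℝ)^n) = 1 := by
    rw [← pow_add]
    exact (neg_one_pow_eq_one_iff_even (by norm_num)).mpr (Even.add_self n)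
  have h3 : (-1:ℝ)^n * ((qs ω (n+2) : ℝ) * Pr ω n + (qs ω (n+1) : ℝ) * Pr ω (n+1)) =
      (-1:ℝ)^n := by
    linear_combination h1
  calc (qs ω (n+2) : ℝ) * Pr ω n + (qs ω (n+1) : ℝ) * Pr ω (n+1)
      = (-1:ℝ)^n * ((-1:ℝ)^n * ((qs ω (n+2) : ℝ) * Pr ω n + (qs ω (n+1) : ℝ) * Pr ω (n+1))) := by
        rw [← mul_assoc, h4, one_mul]
    _ = (-1:ℝ)^n * (-1:ℝ)^n := by rw [h3]
    _ = 1 := h4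

lemma qs_approx (n : ℕ) : (qs ω (n+2) : ℝ) * |Bf ω (n+1)| ≤ 1 := by
  rw [Bf_abs hirr hω n]
  have h := qs_Pr_identity hirr hω n
  have h1 : 0 ≤ (qs ω (n+1) : ℝ) * Pr ω (n+1) :=
    mul_nonneg (Nat.cast_nonneg _) (le_of_lt (Pr_pos hirr hω (n+1)))
  linarith

end CF

/-! ### residue bijection -/

lemma sum_mod_bijection {p q : ℕ} (hq : 1 ≤ q) (hco : Nat.Coprime p q) (g : ℕ → ℝ) :
    ∑ i ∈ Finset.range q, g i = ∑ j ∈ Finset.range q, g (j * p % q) := by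
  rcases eq_or_lt_of_le hq with h1 | h1
  · rw [← h1]
    simp
  · obtain ⟨m, -, hm⟩ := Nat.exists_mul_mod_eq_one_of_coprime hco h1
    have hqpos : 0 < q := by omega
    have key1 : ∀ j, j < q → (j * p % q) * m % q = j := by
      intro j hj
      calc (j * p % q) * m % q = j * p * m % q := by rw [Nat.mod_mul_mod]
        _ = j * (p * m) % q := by rw [mul_assoc]
        _ = (j % q) * ((p * m) % q) % q := by rw [← Nat.mul_mod]
        _ = (j % q) * 1 % q := by rw [hm]
        _ = j := by simp [Nat.mod_eq_of_lt hj]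
    have key2 : ∀ i, i < q → (i * m % q) * p % q = i := by
      intro i hi
      calc (i * m % q) * p % q = i * m * p % q := by rw [Nat.mod_mul_mod]
        _ = i * (p * m) % q := by ring_nf
        _ = (i % q) * ((p * m) % q) % q := by rw [← Nat.mul_mod]
        _ = (i % q) * 1 % q := by rw [hm]
        _ = i := by simp [Nat.mod_eq_of_lt hi]
    refine (Finset.sum_nbij' (fun j => j * p % q) (fun i => i * m % q) ?_ ?_ ?_ ?_ ?_).symm
    · intro a ha
      exact Finset.mem_range.mpr (Nat.mod_lt _ hqpos)
    · intro a ha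
      exact Finset.mem_range.mpr (Nat.mod_lt _ hqpos)
    · intro a ha
      exact key1 a (Finset.mem_range.mp ha)
    · intro a ha
      exact key2 a (Finset.mem_range.mp ha)
    · intro a ha
      rfl

/-! ### birkhoff sum lemmas -/

lemma birkhoff_add (φ : ℝ → ℝ) (ω : ℝ) (m k : ℕ) (x : ℝ) :
    birkhoff φ ω (m + k) x = birkhoff φ ω m x + birkhoff φ ω k (x + (m:ℝ) * ω) := by
  induction k with
  | zero => simp [birkhoff]
  | succ n ih =>
    have h1 : m + (n+1) = (m + n) + 1 := by ring
    rw [h1]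
    unfold birkhoff at *
    rw [Finset.sum_range_succ, ih, Finset.sum_range_succ]
    have : x + (m:ℝ) * ω + (n:ℝ) * ω = x + ((m:ℕ) + (n:ℕ) : ℕ) * ω := by push_cast; ring
    rw [this]
    ring

lemma birkhoff_zero (φ : ℝ → ℝ) (ω : ℝ) (x : ℝ) : birkhoff φ ω 0 x = 0 := by
  simp [birkhoff]

/-- if every block of length q has error at most E, then blocks of length c*q have error c*E -/
lemma birkhoff_mul_bound (φ : ℝ → ℝ) (ω : ℝ) (q : ℕ) (μ E : ℝ) (hE : 0 ≤ E)
    (hblock : ∀ y : ℝ, |birkhoff φ ω q y - (q:ℝ) * μ| ≤ E) (c : ℕ) :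
    ∀ x : ℝ, |birkhoff φ ω (c * q) x - ((c * q : ℕ):ℝ) * μ| ≤ (c:ℝ) * E := by
  induction c with
  | zero => intro x; simp [birkhoff]
  | succ n ih =>
    intro x
    have h1 : (n+1) * q = n * q + q := by ring
    rw [h1, birkhoff_add]
    have h2 := ih x
    have h3 := hblock (x + ((n*q : ℕ):ℝ) * ω)
    have hcast : (((n+1) * q : ℕ):ℝ) * μ = ((n*q : ℕ):ℝ) * μ + (q:ℝ) * μ := by push_cast; ring
    calc |birkhoff φ ω (n*q) x + birkhoff φ ω q (x + ((n*q:ℕ):ℝ) * ω) - ((n * q + q : ℕ):ℝ) * μ|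
        = |(birkhoff φ ω (n*q) x - ((n*q:ℕ):ℝ) * μ) +
            (birkhoff φ ω q (x + ((n*q:ℕ):ℝ) * ω) - (q:ℝ) * μ)| := by
          push_cast; ring_nf
      _ ≤ |birkhoff φ ω (n*q) x - ((n*q:ℕ):ℝ) * μ| +
            |birkhoff φ ω q (x + ((n*q:ℕ):ℝ) * ω) - (q:ℝ) * μ| := abs_add_le _ _
      _ ≤ (n:ℝ) * E + E := add_le_add h2 h3
      _ = ((n+1 : ℕ):ℝ) * E := by push_cast; ring

/-! ### the block (Denjoy–Koksma) estimate -/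

section Block
variable {α ω : ℝ} {φ : ℝ → ℝ}
  (hα : α ∈ Set.Ioc (0:ℝ) 1) (hper : Function.Periodic φ 1) (hHol : IsHolderT α φ)

include hα hper hHol

lemma block_estimate (p q : ℕ) (hq : 1 ≤ q) (hco : Nat.Coprime p q)
    (happ : |(q:ℝ) * ω - (p:ℝ)| ≤ 1 / (q:ℝ)) (y : ℝ) :
    |birkhoff φ ω q y - (q:ℝ) * (∫ t in (0:ℝ)..1, φ t)| ≤
      holderSemi α φ * (2 / (q:ℝ)) ^ α * (q:ℝ) := by
  set H := holderSemi α φ with hH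
  have hH0 : 0 ≤ H := holderSemi_nonneg α φ
  have hq0 : (0:ℝ) < (q:ℝ) := by exact_mod_cast hq
  have hcont : Continuous φ := holder_continuous hα hper hHol
  set μ := ∫ t in (0:ℝ)..1, φ t with hμ
  set a : ℕ → ℝ := fun i => y + (i:ℝ)/(q:ℝ) with ha
  have hint : ∀ k, k < q → IntervalIntegrable φ MeasureTheory.volume (a k) (a (k+1)) :=
    fun k _ => hcont.intervalIntegrable _ _
  have hsplit : ∑ i ∈ Finset.range q, (∫ t in (a i)..(a (i+1)), φ t) = μ := by
    rw [intervalIntegral.sum_integral_adjacent_intervals hint]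
    have h0 : a 0 = y := by simp [ha]
    have hq' : a q = y + 1 := by
      simp only [ha]
      rw [div_self (ne_of_gt hq0)]
    rw [h0, hq']
    have := hper.intervalIntegral_add_eq y 0
    simpa using this
  -- T i = q * integral over i-th piece
  set T : ℕ → ℝ := fun i => (q:ℝ) * ∫ t in (a i)..(a (i+1)), φ t with hT
  have hsumT : ∑ i ∈ Finset.range q, T i = (q:ℝ) * μ := by
    rw [hT, ← Finset.mul_sum, hsplit]
  have hreindex : ∑ i ∈ Finset.range q, T i = ∑ j ∈ Finset.range q, T (j * p % q) :=
    sum_mod_bijection hq hco T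
  have hdiff : birkhoff φ ω q y - (q:ℝ) * μ =
      ∑ j ∈ Finset.range q, (φ (y + (j:ℝ) * ω) - T (j * p % q)) := by
    rw [Finset.sum_sub_distrib, ← hreindex, hsumT]
    rfl
  -- per-term estimate
  have hterm : ∀ j ∈ Finset.range q, |φ (y + (j:ℝ) * ω) - T (j * p % q)| ≤ H * (2/(q:ℝ))^α := by
    intro j hj
    have hjq : j < q := Finset.mem_range.mp hj
    set i := j * p % q with hi
    have hiq : i < q := Nat.mod_lt _ (by omega)
    have haa : a (i+1) - a i = 1/(q:ℝ) := by
      simp only [ha]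
      push_cast
      ring
    have hale : a i ≤ a (i+1) := by rw [← sub_nonneg, haa]; positivity
    -- pointwise distance estimate
    have hpt : ∀ t ∈ Set.uIoc (a i) (a (i+1)), |φ (y + (j:ℝ) * ω) - φ t| ≤ H * (2/(q:ℝ))^α := by
      intro t ht
      rw [Set.uIoc_of_le hale] at ht
      have ht1 : a i < t := ht.1
      have ht2 : t ≤ a (i+1) := ht.2
      -- distT bound
      have hd : distT (y + (j:ℝ) * ω) t ≤ 2/(q:ℝ) := by
        unfold distT
        have e1 : y + (j:ℝ) * ω - t = ((j:ℝ) * ω - (j:ℝ)*(p:ℝ)/(q:ℝ)) + ((j:ℝ)*(p:ℝ)/(q:ℝ) - (t - y)) := by ring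
        rw [e1]
        refine le_trans (nint_add_le _ _) ?_
        have h1 : nint ((j:ℝ) * ω - (j:ℝ)*(p:ℝ)/(q:ℝ)) ≤ 1/(q:ℝ) := by
          refine le_trans (nint_le_abs _) ?_
          have e2 : (j:ℝ) * ω - (j:ℝ)*(p:ℝ)/(q:ℝ) = ((j:ℝ)/(q:ℝ)) * ((q:ℝ) * ω - (p:ℝ)) := by
            field_simp
          rw [e2, abs_mul]
          have hj1 : |((j:ℝ)/(q:ℝ))| ≤ 1 := by
            rw [abs_of_nonneg (by positivity)]
            rw [div_le_one hq0]
            exact_mod_cast le_of_lt hjq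
          calc |((j:ℝ)/(q:ℝ))| * |(q:ℝ) * ω - (p:ℝ)| ≤ 1 * (1/(q:ℝ)) :=
              mul_le_mul hj1 happ (abs_nonneg _) (by norm_num)
            _ = 1/(q:ℝ) := one_mul _
        have h2 : nint ((j:ℝ)*(p:ℝ)/(q:ℝ) - (t - y)) ≤ 1/(q:ℝ) := by
          have hdm : j * p = q * (j * p / q) + i := (Nat.div_add_mod (j*p) q).symm
          have hcst : (j:ℝ)*(p:ℝ) = (q:ℝ) * ((j*p/q : ℕ):ℝ) + (i:ℝ) := by
            exact_mod_cast congrArg (fun n : ℕ => (n:ℝ)) hdm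
          have e3 : (j:ℝ)*(p:ℝ)/(q:ℝ) - (t - y) =
              (((j*p/q : ℕ) : ℤ) : ℝ) + ((i:ℝ)/(q:ℝ) - (t - y)) := by
            have hces : (((j*p/q : ℕ) : ℤ) : ℝ) = ((j*p/q : ℕ) : ℝ) := by
              norm_cast
            rw [hces]
            field_simp
            linear_combination hcst
          rw [e3, nint_int_add]
          refine le_trans (nint_le_abs _) ?_
          have hai : a i = y + (i:ℝ)/(q:ℝ) := rfl
          have hai1 : a (i+1) = y + ((i:ℝ)+1)/(q:ℝ) := by
            simp only [ha]
            push_cast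
            ring
          rw [hai] at ht1
          rw [hai1] at ht2
          have hs1 : (i:ℝ)/(q:ℝ) < t - y := by linarith
          have hs2 : t - y ≤ (i:ℝ)/(q:ℝ) + 1/(q:ℝ) := by
            have : ((i:ℝ)+1)/(q:ℝ) = (i:ℝ)/(q:ℝ) + 1/(q:ℝ) := by ring
            linarith
          rw [abs_sub_comm, abs_of_nonneg (by linarith)]
          linarith
        have h2q : (2:ℝ)/(q:ℝ) = 1/(q:ℝ) + 1/(q:ℝ) := by ring
        rw [h2q]
        linarith
      calc |φ (y + (j:ℝ) * ω) - φ t| ≤ H * distT (y + (j:ℝ) * ω) t ^ α :=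
          holder_bound hα hper hHol _ _
        _ ≤ H * (2/(q:ℝ))^α :=
            mul_le_mul_of_nonneg_left
              (Real.rpow_le_rpow (distT_nonneg _ _) hd (le_of_lt hα.1)) hH0
    -- integral estimate
    have hTi : φ (y + (j:ℝ) * ω) - T i =
        (q:ℝ) * ∫ t in (a i)..(a (i+1)), (φ (y + (j:ℝ) * ω) - φ t) := by
      rw [intervalIntegral.integral_sub (intervalIntegrable_const) (hcont.intervalIntegrable _ _)]
      rw [intervalIntegral.integral_const, haa]
      simp only [hT, smul_eq_mul]
      field_simp
    rw [hTi, abs_mul, abs_of_nonneg (le_of_lt hq0)]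
    have := intervalIntegral.norm_integral_le_of_norm_le_const
      (C := H * (2/(q:ℝ))^α) (f := fun t => φ (y + (j:ℝ) * ω) - φ t) (a := a i) (b := a (i+1))
      (fun t ht => by simpa using hpt t ht)
    rw [Real.norm_eq_abs] at this
    rw [haa] at this
    rw [abs_of_nonneg (by positivity : (0:ℝ) ≤ 1/(q:ℝ))] at this
    calc (q:ℝ) * |∫ t in (a i)..(a (i+1)), (φ (y + (j:ℝ) * ω) - φ t)| ≤
        (q:ℝ) * (H * (2/(q:ℝ))^α * (1/(q:ℝ))) := by
          apply mul_le_mul_of_nonneg_left this (le_of_lt hq0)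
      _ = H * (2/(q:ℝ))^α := by field_simp
  calc |birkhoff φ ω q y - (q:ℝ) * μ| = |∑ j ∈ Finset.range q, (φ (y + (j:ℝ) * ω) - T (j * p % q))| := by
        rw [hdiff]
    _ ≤ ∑ j ∈ Finset.range q, |φ (y + (j:ℝ) * ω) - T (j * p % q)| :=
        Finset.abs_sum_le_sum_abs _ _
    _ ≤ ∑ j ∈ Finset.range q, H * (2/(q:ℝ))^α := Finset.sum_le_sum hterm
    _ = H * (2/(q:ℝ))^α * (q:ℝ) := by
        rw [Finset.sum_const, Finset.card_range]
        push_cast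
        ring

end Block

/-! ### Hölder inequality for sums -/

lemma holder_sum {α : ℝ} (hα : α ∈ Set.Ioc (0:ℝ) 1) (s : Finset ℕ) (u v : ℕ → ℝ)
    (hu : ∀ i ∈ s, 0 ≤ u i) (hv : ∀ i ∈ s, 0 ≤ v i) :
    ∑ i ∈ s, (u i)^((1:ℝ)-α) * (v i)^α ≤ (∑ i ∈ s, u i)^((1:ℝ)-α) * (∑ i ∈ s, v i)^α := by
  rcases eq_or_lt_of_le hα.2 with h1 | h1
  · -- α = 1
    subst h1
    simp
  · -- α < 1
    have h1α : (0:ℝ) < 1 - α := by linarith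
    have hU0 : 0 ≤ ∑ i ∈ s, u i := Finset.sum_nonneg hu
    have hV0 : 0 ≤ ∑ i ∈ s, v i := Finset.sum_nonneg hv
    rcases eq_or_lt_of_le hU0 with hU | hU
    · have hzero : ∀ i ∈ s, u i = 0 :=
        (Finset.sum_eq_zero_iff_of_nonneg hu).mp hU.symm
      have : ∑ i ∈ s, (u i)^((1:ℝ)-α) * (v i)^α = 0 := by
        apply Finset.sum_eq_zero
        intro i hi
        rw [hzero i hi, Real.zero_rpow (ne_of_gt h1α), zero_mul]
      rw [this]
      positivity
    rcases eq_or_lt_of_le hV0 with hV | hV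
    · have hzero : ∀ i ∈ s, v i = 0 :=
        (Finset.sum_eq_zero_iff_of_nonneg hv).mp hV.symm
      have : ∑ i ∈ s, (u i)^((1:ℝ)-α) * (v i)^α = 0 := by
        apply Finset.sum_eq_zero
        intro i hi
        rw [hzero i hi, Real.zero_rpow (ne_of_gt hα.1), mul_zero]
      rw [this]
      positivity
    · set U := ∑ i ∈ s, u i
      set V := ∑ i ∈ s, v i
      have key : ∀ i ∈ s, (u i)^((1:ℝ)-α) * (v i)^α ≤
          U^((1:ℝ)-α) * V^α * ((1-α) * (u i / U) + α * (v i / V)) := by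
        intro i hi
        have hgm := Real.geom_mean_le_arith_mean2_weighted
          (le_of_lt h1α) (le_of_lt hα.1)
          (div_nonneg (hu i hi) (le_of_lt hU)) (div_nonneg (hv i hi) (le_of_lt hV))
          (by ring)
        have e1 : (u i / U)^((1:ℝ)-α) = (u i)^((1:ℝ)-α) / U^((1:ℝ)-α) :=
          Real.div_rpow (hu i hi) (le_of_lt hU) _
        have e2 : (v i / V)^α = (v i)^α / V^α :=
          Real.div_rpow (hv i hi) (le_of_lt hV) _
        rw [e1, e2] at hgm
        have hUp : 0 < U^((1:ℝ)-α) := Real.rpow_pos_of_pos hU _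
        have hVp : 0 < V^α := Real.rpow_pos_of_pos hV _
        have := mul_le_mul_of_nonneg_left hgm (le_of_lt (mul_pos hUp hVp))
        calc (u i)^((1:ℝ)-α) * (v i)^α
            = U^((1:ℝ)-α) * V^α * ((u i)^((1:ℝ)-α) / U^((1:ℝ)-α) * ((v i)^α / V^α)) := by
              field_simp
          _ ≤ U^((1:ℝ)-α) * V^α * ((1-α) * (u i / U) + α * (v i / V)) := this
      calc ∑ i ∈ s, (u i)^((1:ℝ)-α) * (v i)^α
          ≤ ∑ i ∈ s, U^((1:ℝ)-α) * V^α * ((1-α) * (u i / U) + α * (v i / V)) :=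
            Finset.sum_le_sum key
        _ = U^((1:ℝ)-α) * V^α * (∑ i ∈ s, ((1-α) * (u i / U) + α * (v i / V))) := by
            rw [← Finset.mul_sum]
        _ = U^((1:ℝ)-α) * V^α * ((1-α) * (U/U) + α * (V/V)) := by
            rw [Finset.sum_add_distrib, ← Finset.mul_sum, ← Finset.mul_sum,
              ← Finset.sum_div, ← Finset.sum_div]
        _ = U^((1:ℝ)-α) * V^α := by
            rw [div_self (ne_of_gt hU), div_self (ne_of_gt hV)]
            ring

/-! ### greedy (Ostrowski) decomposition -/

lemma greedy {γ ω α : ℝ} {φ : ℝ → ℝ} (hω : ω ∈ Set.Ioo (0:ℝ) 1) (hirr : Irrational ω)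
    (hα : α ∈ Set.Ioc (0:ℝ) 1) (hper : Function.Periodic φ 1) (hHol : IsHolderT α φ)
    (N : ℕ) (M : ℕ) (hM : N < qs ω (M+1)) :
    ∀ N' : ℕ, N' ≤ N → ∃ b : ℕ → ℕ,
      (∀ n, b n ≠ 0 → qs ω (n+1) ≤ N') ∧
      (∀ n, b n = 0 ∨ ((b n : ℝ) * (qs ω (n+1) : ℝ) < (qs ω (n+2) : ℝ))) ∧
      (∑ n ∈ Finset.range M, b n * qs ω (n+1) = N') ∧
      (∀ x : ℝ, |birkhoff φ ω N' x - (N' : ℝ) * (∫ t in (0:ℝ)..1, φ t)| ≤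
        ∑ n ∈ Finset.range M, (b n : ℝ) *
          (holderSemi α φ * (2/(qs ω (n+1):ℝ))^α * (qs ω (n+1):ℝ))) := by
  intro N'
  induction N' using Nat.strong_induction_on with
  | _ N' ih =>
  intro hN'le
  rcases Nat.eq_zero_or_pos N' with h0 | hpos
  · subst h0
    refine ⟨fun _ => 0, by simp, by simp, by simp, ?_⟩
    intro x
    simp [birkhoff_zero]
  · set P : ℕ → Prop := fun n => qs ω (n+1) ≤ N' with hP
    have hP0 : P 0 := by
      show qs ω 1 ≤ N'
      rw [qs_one]
      omega
    set n₀ := Nat.findGreatest P M with hn₀def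
    have hn₀ : P n₀ := Nat.findGreatest_spec (Nat.zero_le M) hP0
    have hn₀leM : n₀ ≤ M := Nat.findGreatest_le M
    have hn₀M : n₀ < M := by
      rcases lt_or_eq_of_le hn₀leM with h | h
      · exact h
      · exfalso
        rw [h] at hn₀
        have : qs ω (M+1) ≤ N' := hn₀
        omega
    have hnext : ¬ P (n₀ + 1) :=
      Nat.findGreatest_is_greatest (Nat.lt_succ_self n₀) (by omega)
    have hnext' : N' < qs ω (n₀ + 2) := by
      simp only [hP, not_le] at hnext
      exact hnext
    set q := qs ω (n₀ + 1) with hqdef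
    have hq1 : 1 ≤ q := qs_ge_one hirr hω n₀
    set b₀ := N' / q with hb₀def
    set r := N' % q with hrdef
    have hqN' : q ≤ N' := hn₀
    have hr : r < q := Nat.mod_lt _ (by omega)
    have hrN' : r < N' := lt_of_lt_of_le hr hqN'
    obtain ⟨br, hbr1, hbr2, hbr3, hbr4⟩ := ih r hrN' (by omega)
    have hbrn₀ : br n₀ = 0 := by
      by_contra h
      have := hbr1 n₀ h
      omega
    refine ⟨fun n => if n = n₀ then b₀ else br n, ?_, ?_, ?_, ?_⟩
    · intro n hn
      by_cases hcase : n = n₀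
      · subst hcase; exact hqN'
      · simp only [hcase, if_false] at hn
        have := hbr1 n hn
        omega
    · intro n
      by_cases hcase : n = n₀
      · subst hcase
        simp only [if_true]
        right
        have h1 : b₀ * q ≤ N' := Nat.div_mul_le_self N' q
        have h2 : b₀ * q < qs ω (n₀ + 2) := lt_of_le_of_lt h1 hnext'
        exact_mod_cast h2
      · simp only [hcase, if_false]
        exact hbr2 n
    · have hmem : n₀ ∈ Finset.range M := Finset.mem_range.mpr hn₀M
      rw [Finset.sum_eq_sum_sdiff_singleton_add hmem]
      have hdiff_eq : ∑ n ∈ Finset.range M \ {n₀},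
          (if n = n₀ then b₀ else br n) * qs ω (n+1) =
          ∑ n ∈ Finset.range M \ {n₀}, br n * qs ω (n+1) := by
        apply Finset.sum_congr rfl
        intro n hn
        have : n ≠ n₀ := by
          rw [Finset.mem_sdiff, Finset.mem_singleton] at hn
          exact hn.2
        simp [this]
      rw [hdiff_eq]
      have hbr_sum : ∑ n ∈ Finset.range M \ {n₀}, br n * qs ω (n+1) = r := by
        have := Finset.sum_eq_sum_sdiff_singleton_add hmem
          (fun n => br n * qs ω (n+1))
        rw [hbrn₀] at this
        simp at this
        rw [← hbr3, this]
      rw [hbr_sum]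
      simp only [if_pos rfl]
      rw [hb₀def, hrdef, Nat.add_comm]
      exact Nat.div_add_mod' N' q
    · intro x
      set μ := ∫ t in (0:ℝ)..1, φ t with hμdef
      set H := holderSemi α φ with hHdef
      have hH0 : 0 ≤ H := holderSemi_nonneg α φ
      -- block estimate at scale n₀
      have happ : |(q:ℝ) * ω - (ps ω (n₀+1) : ℝ)| ≤ 1/(q:ℝ) := by
        have h1 := qs_approx hirr hω n₀
        have h2 : (q:ℝ) ≤ (qs ω (n₀+2) : ℝ) := by
          exact_mod_cast qs_mono_succ hirr hω n₀
        have h3 : (q:ℝ) * |Bf ω (n₀+1)| ≤ 1 := by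
          refine le_trans ?_ h1
          apply mul_le_mul_of_nonneg_right h2 (abs_nonneg _)
        have hq0 : (0:ℝ) < q := by exact_mod_cast hq1
        have : |Bf ω (n₀+1)| ≤ 1/(q:ℝ) := by
          rw [le_div_iff₀ hq0]
          linarith
        unfold Bf at this
        rwa [← hqdef] at this
      have hblock : ∀ y : ℝ, |birkhoff φ ω q y - (q:ℝ) * μ| ≤ H * (2/(q:ℝ))^α * (q:ℝ) :=
        fun y => block_estimate hα hper hHol (ps ω (n₀+1)) q hq1 (ps_qs_coprime ω n₀) happ y
      have hE0 : 0 ≤ H * (2/(q:ℝ))^α * (q:ℝ) := by positivity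
      have hmul := birkhoff_mul_bound φ ω q μ (H * (2/(q:ℝ))^α * (q:ℝ)) hE0 hblock b₀ x
      have hrest := hbr4 (x + ((b₀ * q : ℕ) : ℝ) * ω)
      have hNsplit : N' = b₀ * q + r := by
        rw [hb₀def, hrdef]
        exact (Nat.div_add_mod' N' q).symm
      have hdecomp : birkhoff φ ω N' x =
          birkhoff φ ω (b₀ * q) x + birkhoff φ ω r (x + ((b₀ * q : ℕ) : ℝ) * ω) := by
        conv_lhs => rw [hNsplit]
        exact birkhoff_add φ ω (b₀ * q) r x
      have hcastN : (N' : ℝ) * μ = ((b₀ * q : ℕ) : ℝ) * μ + (r : ℝ) * μ := by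
        rw [hNsplit]
        push_cast
        ring
      have htri : |birkhoff φ ω N' x - (N' : ℝ) * μ| ≤
          (b₀ : ℝ) * (H * (2/(q:ℝ))^α * (q:ℝ)) +
          ∑ n ∈ Finset.range M, (br n : ℝ) * (H * (2/(qs ω (n+1):ℝ))^α * (qs ω (n+1):ℝ)) := by
        rw [hdecomp, hcastN]
        calc |birkhoff φ ω (b₀*q) x + birkhoff φ ω r (x + ((b₀*q:ℕ):ℝ)*ω)
              - (((b₀*q:ℕ):ℝ) * μ + (r:ℝ) * μ)|
            = |(birkhoff φ ω (b₀*q) x - ((b₀*q:ℕ):ℝ) * μ) +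
               (birkhoff φ ω r (x + ((b₀*q:ℕ):ℝ)*ω) - (r:ℝ) * μ)| := by ring_nf
          _ ≤ |birkhoff φ ω (b₀*q) x - ((b₀*q:ℕ):ℝ) * μ| +
               |birkhoff φ ω r (x + ((b₀*q:ℕ):ℝ)*ω) - (r:ℝ) * μ| := abs_add_le _ _
          _ ≤ (b₀ : ℝ) * (H * (2/(q:ℝ))^α * (q:ℝ)) +
               ∑ n ∈ Finset.range M, (br n : ℝ) * (H * (2/(qs ω (n+1):ℝ))^α * (qs ω (n+1):ℝ)) :=
              add_le_add hmul hrest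
      refine le_trans htri (le_of_eq ?_)
      have hmem : n₀ ∈ Finset.range M := Finset.mem_range.mpr hn₀M
      rw [Finset.sum_eq_sum_sdiff_singleton_add hmem
        (fun n => ((if n = n₀ then b₀ else br n : ℕ) : ℝ) *
          (H * (2/(qs ω (n+1):ℝ))^α * (qs ω (n+1):ℝ)))]
      rw [Finset.sum_eq_sum_sdiff_singleton_add hmem
        (fun n => (br n : ℝ) * (H * (2/(qs ω (n+1):ℝ))^α * (qs ω (n+1):ℝ)))]
      have hdiff_eq2 : ∑ n ∈ Finset.range M \ {n₀},
          ((if n = n₀ then b₀ else br n : ℕ) : ℝ) *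
            (H * (2/(qs ω (n+1):ℝ))^α * (qs ω (n+1):ℝ)) =
          ∑ n ∈ Finset.range M \ {n₀},
            (br n : ℝ) * (H * (2/(qs ω (n+1):ℝ))^α * (qs ω (n+1):ℝ)) := by
        apply Finset.sum_congr rfl
        intro n hn
        have : n ≠ n₀ := by
          rw [Finset.mem_sdiff, Finset.mem_singleton] at hn
          exact hn.2
        simp [this]
      rw [hdiff_eq2, hbrn₀]
      simp only [if_true, Nat.cast_zero, zero_mul, add_zero]
      ring

/-! ### small γ and denominator growth under the Diophantine condition -/

lemma gamma_small {γ ω : ℝ} (hγ : 0 < γ) (hdio : DiophCond γ ω) : γ ≤ 1/4 := by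
  have h1 := hdio 1 one_ne_zero
  norm_num at h1
  have h2 : nint ω ≤ 1/2 := nint_le_half ω
  have hl2 : (0.6931471803:ℝ) < Real.log 2 := Real.log_two_gt_d9
  have hlu : Real.log 2 < 0.6931471808 := Real.log_two_lt_d9
  rw [div_le_iff₀ (by positivity)] at h1
  have h3 : Real.log 2 ^ 2 ≤ 0.4805 := by nlinarith [hlu, hl2]
  have h4 : nint ω * Real.log 2 ^ 2 ≤ (1/2) * 0.4805 :=
    mul_le_mul h2 h3 (by positivity) (by norm_num)
  linarith

lemma Q_next {γ ω : ℝ} (hirr : Irrational ω) (hω : ω ∈ Set.Ioo (0:ℝ) 1)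
    (hγ : 0 < γ) (hdio : DiophCond γ ω) (n : ℕ) :
    (qs ω (n+2) : ℝ) * γ ≤ (qs ω (n+1) : ℝ) * Real.log ((qs ω (n+1) : ℝ) + 1) ^ 2 := by
  set Qn := qs ω (n+1) with hQn
  have hQ1 : 1 ≤ Qn := qs_ge_one hirr hω n
  have hQ0 : (0:ℝ) < (Qn:ℝ) := by exact_mod_cast hQ1
  have hk : ((Qn : ℤ) : ℝ) = (Qn : ℝ) := by push_cast; rfl
  have h1 := hdio (Qn : ℤ) (by exact_mod_cast Nat.one_le_iff_ne_zero.mp hQ1)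
  rw [hk, abs_of_pos hQ0] at h1
  have h2 : nint ((Qn:ℝ) * ω) ≤ |Bf ω (n+1)| := by
    have hpc : ((ps ω (n+1) : ℤ) : ℝ) = ((ps ω (n+1) : ℕ) : ℝ) := by push_cast; rfl
    have hle := nint_le_int ((Qn:ℝ) * ω) ((ps ω (n+1) : ℤ))
    rw [hpc] at hle
    unfold Bf
    rw [← hQn]
    exact hle
  have h3 : (qs ω (n+2) : ℝ) * |Bf ω (n+1)| ≤ 1 := qs_approx hirr hω n
  have hD : (0:ℝ) < (Qn:ℝ) * Real.log ((Qn:ℝ) + 1) ^ 2 := by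
    have : (1:ℝ) < (Qn:ℝ) + 1 := by linarith
    have := Real.log_pos this
    positivity
  have h4 : γ / ((Qn:ℝ) * Real.log ((Qn:ℝ) + 1) ^ 2) ≤ |Bf ω (n+1)| := le_trans h1 h2
  have h5 : (qs ω (n+2) : ℝ) * (γ / ((Qn:ℝ) * Real.log ((Qn:ℝ) + 1) ^ 2)) ≤ 1 := by
    refine le_trans ?_ h3
    exact mul_le_mul_of_nonneg_left h4 (Nat.cast_nonneg _)
  rw [mul_div_assoc', div_le_one hD] at h5
  exact h5

/-! ### the main theorem -/

open Real in
lemma digit_pow {α : ℝ} (hα : α ∈ Set.Ioc (0:ℝ) 1) (b Q : ℝ) (hb : 0 ≤ b) (hQ : 0 ≤ Q) :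
    b * Q ^ ((1:ℝ) - α) = (b * Q) ^ ((1:ℝ) - α) * b ^ α := by
  rcases eq_or_lt_of_le hb with h | h
  · rw [← h, Real.zero_rpow (ne_of_gt hα.1), mul_zero, zero_mul]
  · rw [Real.mul_rpow (le_of_lt h) hQ]
    have hbb : b ^ ((1:ℝ) - α) * b ^ α = b := by
      rw [← Real.rpow_add h]
      norm_num
    calc b * Q ^ ((1:ℝ)-α) = (b ^ ((1:ℝ)-α) * b ^ α) * Q ^ ((1:ℝ)-α) := by rw [hbb]
      _ = b ^ ((1:ℝ)-α) * Q ^ ((1:ℝ)-α) * b ^ α := by ring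

end Stmt0

set_option maxHeartbeats 1000000 in
/-- extension of the Denjoy–Koksma inequality, Theorem 1.3:
for a Diophantine frequency `ω` and an `α`-Hölder observable `φ`, the Birkhoff averages
converge at rate `(log N)^{3α} / N^α`, with explicit dependence on the data. -/
theorem stmt0 :
    ∃ C : ℝ, 0 < C ∧
      ∀ (γ ω α : ℝ) (φ : ℝ → ℝ),
        0 < γ → ω ∈ Set.Ioo (0 : ℝ) 1 → Irrational ω → DiophCond γ ω →
        α ∈ Set.Ioc (0 : ℝ) 1 → Function.Periodic φ 1 → IsHolderT α φ →
        ∀ N : ℕ, 2 ≤ N → ∀ x : ℝ,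
          |(1 / (N : ℝ)) * birkhoff φ ω N x - ∫ t in (0:ℝ)..1, φ t| ≤
            C * (1 / γ) * Real.log (1 / γ) * holderNorm α φ *
              Real.log (N : ℝ) ^ (3 * α) / (N : ℝ) ^ α := by
  refine ⟨100, by norm_num, ?_⟩
  intro γ ω α φ hγ hω hirr hdio hα hper hHol N hN x
  open Stmt0 in
  -- basic facts
  have haN : (2:ℝ) ≤ (N:ℝ) := by exact_mod_cast hN
  have hN0 : (0:ℝ) < (N:ℝ) := by linarith
  have hlogN0 : 0 < Real.log (N:ℝ) := Real.log_pos (by linarith)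
  have hlogN2 : Real.log 2 ≤ Real.log (N:ℝ) := Real.log_le_log (by norm_num) haN
  have hl2 : (0.6931471803:ℝ) < Real.log 2 := Real.log_two_gt_d9
  have hγ4 : γ ≤ 1/4 := Stmt0.gamma_small hγ hdio
  have hinvγ : (4:ℝ) ≤ 1/γ := by
    rw [le_div_iff₀ hγ]
    linarith
  have hlogγ1 : (1:ℝ) ≤ Real.log (1/γ) := by
    have h4 : Real.log 4 ≤ Real.log (1/γ) := Real.log_le_log (by norm_num) hinvγ
    have : Real.log 4 = 2 * Real.log 2 := by
      rw [show (4:ℝ) = 2^2 by norm_num, Real.log_pow]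
      push_cast; ring
    linarith
  -- the scale cut-off M
  set K := Nat.log 2 N + 1 with hK
  set M := 2 * K with hMdef
  have hM : N < qs ω (M+1) := by
    have h1 : N < 2^K := by
      rw [hK]
      exact Nat.lt_pow_succ_log_self (by norm_num) N
    have h2 : 2^K ≤ qs ω (M+1) := by
      rw [hMdef]
      exact Stmt0.Q_pow hirr hω K
    omega
  -- greedy decomposition
  obtain ⟨b, hb1, hb2, hb3, hb4⟩ :=
    Stmt0.greedy (γ := γ) hω hirr hα hper hHol N M hM N le_rfl
  set H := holderSemi α φ with hH
  have hH0 : 0 ≤ H := Stmt0.holderSemi_nonneg α φ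
  set μ := ∫ t in (0:ℝ)..1, φ t with hμ
  set L : ℝ := Real.log ((N:ℝ)+1)^2 / γ with hL
  -- digit bounds
  have hbL : ∀ n ∈ Finset.range M, (b n : ℝ) ≤ L := by
    intro n _
    have hLnn : (0:ℝ) ≤ L := by
      rw [hL]
      have h5 : (1:ℝ) < (N:ℝ)+1 := by linarith
      have h6 := Real.log_pos h5
      positivity
    rcases hb2 n with h | h
    · rw [h]
      simpa using hLnn
    · by_cases hbz : b n = 0
      · rw [hbz]
        simpa using hLnn
      have hQN : qs ω (n+1) ≤ N := hb1 n hbz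
      have hQ1 : 1 ≤ qs ω (n+1) := Stmt0.qs_ge_one hirr hω n
      have hQ0 : (0:ℝ) < (qs ω (n+1) : ℝ) := by exact_mod_cast hQ1
      have hnext := Stmt0.Q_next hirr hω hγ hdio n
      have hlogmono : Real.log ((qs ω (n+1):ℝ)+1) ≤ Real.log ((N:ℝ)+1) := by
        apply Real.log_le_log (by positivity)
        have : (qs ω (n+1) : ℝ) ≤ (N:ℝ) := by exact_mod_cast hQN
        linarith
      have hlogQpos : 0 ≤ Real.log ((qs ω (n+1):ℝ)+1) := by
        apply Real.log_nonneg
        linarith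
      have hsq : Real.log ((qs ω (n+1):ℝ)+1)^2 ≤ Real.log ((N:ℝ)+1)^2 :=
        pow_le_pow_left₀ hlogQpos hlogmono 2
      -- b n * Q n < Q (n+1) ≤ Q n * log(N+1)^2 / γ
      have h6 : (b n : ℝ) * (qs ω (n+1) : ℝ) * γ < (qs ω (n+1) : ℝ) * Real.log ((N:ℝ)+1)^2 := by
        calc (b n : ℝ) * (qs ω (n+1) : ℝ) * γ < (qs ω (n+2) : ℝ) * γ := by
              apply mul_lt_mul_of_pos_right h hγ
          _ ≤ (qs ω (n+1) : ℝ) * Real.log ((qs ω (n+1):ℝ)+1)^2 := hnext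
          _ ≤ (qs ω (n+1) : ℝ) * Real.log ((N:ℝ)+1)^2 :=
              mul_le_mul_of_nonneg_left hsq (le_of_lt hQ0)
      rw [hL]
      rw [le_div_iff₀ hγ]
      nlinarith [h6, hQ0]
  -- nonnegativity of L
  have hL0 : (0:ℝ) ≤ L := by
    rw [hL]
    have h5 : (1:ℝ) < (N:ℝ)+1 := by linarith
    have h6 := Real.log_pos h5
    positivity
  -- numeric bound on M
  have hM6 : (M:ℝ) ≤ 6*Real.log (N:ℝ) := by
    have hNne : N ≠ 0 := by omega
    have h1 : (2:ℕ)^(Nat.log 2 N) ≤ N := Nat.pow_log_le_self 2 hNne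
    have h2 : ((2:ℝ))^((Nat.log 2 N : ℕ)) ≤ (N:ℝ) := by exact_mod_cast h1
    have h3 : (Nat.log 2 N : ℝ) * Real.log 2 ≤ Real.log (N:ℝ) := by
      rw [← Real.log_pow]
      exact Real.log_le_log (by positivity) h2
    have h40 : (0:ℝ) ≤ (Nat.log 2 N : ℝ) := Nat.cast_nonneg _
    have h5 : (2/3:ℝ) ≤ Real.log 2 := by linarith
    have h6 : (Nat.log 2 N:ℝ) * (2/3) ≤ Real.log (N:ℝ) :=
      le_trans (mul_le_mul_of_nonneg_left h5 h40) h3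
    have h7 : (M:ℝ) = 2*(Nat.log 2 N : ℝ) + 2 := by rw [hMdef, hK]; push_cast; ring
    have h8 : (2:ℝ) ≤ 3*Real.log (N:ℝ) := by nlinarith
    rw [h7]
    linarith
  -- numeric bound on L
  have hL4 : L ≤ 4*Real.log (N:ℝ)^2/γ := by
    rw [hL]
    have hnum : Real.log ((N:ℝ)+1)^2 ≤ 4*Real.log (N:ℝ)^2 := by
      have hle : Real.log ((N:ℝ)+1) ≤ 2*Real.log (N:ℝ) := by
        have hsq : (N:ℝ)+1 ≤ (N:ℝ)^2 := by nlinarith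
        calc Real.log ((N:ℝ)+1) ≤ Real.log ((N:ℝ)^2) := Real.log_le_log (by positivity) hsq
          _ = 2*Real.log (N:ℝ) := by
              rw [Real.log_pow]; push_cast; ring
      have h0 : 0 ≤ Real.log ((N:ℝ)+1) := Real.log_nonneg (by linarith)
      nlinarith
    gcongr
  have hML : (M:ℝ)*L ≤ 24*Real.log (N:ℝ)^3/γ := by
    calc (M:ℝ)*L ≤ (6*Real.log (N:ℝ))*(4*Real.log (N:ℝ)^2/γ) :=
        mul_le_mul hM6 hL4 hL0 (by positivity)
      _ = 24*Real.log (N:ℝ)^3/γ := by ring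
  -- the sum of digits
  set SB := ∑ n ∈ Finset.range M, (b n : ℝ) with hSBdef
  have hSB0 : (0:ℝ) ≤ SB := Finset.sum_nonneg (fun i _ => Nat.cast_nonneg _)
  have hSBle : SB ≤ (M:ℝ)*L := by
    have := Finset.sum_le_card_nsmul (Finset.range M) (fun n => (b n:ℝ)) L hbL
    simpa [Finset.card_range, nsmul_eq_mul] using this
  have hSBα : SB^α ≤ (24/γ) * Real.log (N:ℝ)^(3*α) := by
    have e1 : SB ≤ 24*Real.log (N:ℝ)^3/γ := le_trans hSBle hML
    have e2 : SB^α ≤ (24*Real.log (N:ℝ)^3/γ)^α :=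
      Real.rpow_le_rpow hSB0 e1 (le_of_lt hα.1)
    have e3 : (24*Real.log (N:ℝ)^3/γ)^α = (24/γ)^α * ((Real.log (N:ℝ)^3):ℝ)^α := by
      rw [show 24*Real.log (N:ℝ)^3/γ = (24/γ)*(Real.log (N:ℝ)^3) by ring]
      exact Real.mul_rpow (by positivity) (by positivity)
    have e4 : ((Real.log (N:ℝ)^3):ℝ)^α = Real.log (N:ℝ)^(3*α) := by
      rw [← Real.rpow_natCast (Real.log (N:ℝ)) 3, ← Real.rpow_mul (le_of_lt hlogN0)]
      norm_num
    have e5 : ((24:ℝ)/γ)^α ≤ 24/γ := by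
      have h1 : (1:ℝ) ≤ 24/γ := by
        rw [le_div_iff₀ hγ]
        linarith
      calc ((24:ℝ)/γ)^α ≤ ((24:ℝ)/γ)^(1:ℝ) := Real.rpow_le_rpow_of_exponent_le h1 hα.2
        _ = 24/γ := Real.rpow_one _
    calc SB^α ≤ (24/γ)^α * ((Real.log (N:ℝ)^3):ℝ)^α := by rw [← e3]; exact e2
      _ = (24/γ)^α * Real.log (N:ℝ)^(3*α) := by rw [e4]
      _ ≤ (24/γ) * Real.log (N:ℝ)^(3*α) :=
          mul_le_mul_of_nonneg_right e5 (by positivity)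
  -- sum of b_n q_n equals N
  have hsumu : ∑ n ∈ Finset.range M, (b n:ℝ)*(qs ω (n+1):ℝ) = (N:ℝ) := by
    have := congrArg (fun k : ℕ => (k:ℝ)) hb3
    push_cast at this
    exact this
  -- Hölder interpolation of the sum
  have hSQ1 : ∑ n ∈ Finset.range M, (b n:ℝ)*((qs ω (n+1):ℝ))^((1:ℝ)-α) ≤
      (N:ℝ)^((1:ℝ)-α) * SB^α := by
    have hstep : ∀ n ∈ Finset.range M, (b n:ℝ)*((qs ω (n+1):ℝ))^((1:ℝ)-α)
        = ((b n:ℝ)*(qs ω (n+1):ℝ))^((1:ℝ)-α) * ((b n:ℝ))^α := fun n _ =>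
      Stmt0.digit_pow hα _ _ (Nat.cast_nonneg _) (Nat.cast_nonneg _)
    rw [Finset.sum_congr rfl hstep]
    have hhs := Stmt0.holder_sum hα (Finset.range M)
      (fun n => (b n:ℝ)*(qs ω (n+1):ℝ)) (fun n => (b n:ℝ))
      (fun i _ => by positivity) (fun i _ => Nat.cast_nonneg _)
    rw [hsumu] at hhs
    exact hhs
  -- rewriting the block weights
  have hterm : ∀ n : ℕ, H * (2/(qs ω (n+1):ℝ))^α * (qs ω (n+1):ℝ)
      = (2:ℝ)^α * H * ((qs ω (n+1):ℝ))^((1:ℝ)-α) := by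
    intro n
    have hq1 : 1 ≤ qs ω (n+1) := Stmt0.qs_ge_one hirr hω n
    have hq0 : (0:ℝ) < (qs ω (n+1):ℝ) := by exact_mod_cast hq1
    rw [Real.div_rpow (by norm_num : (0:ℝ) ≤ 2) (le_of_lt hq0),
      Real.rpow_sub hq0, Real.rpow_one]
    ring
  have hTsum : ∑ n ∈ Finset.range M, (b n:ℝ)*(H*(2/(qs ω (n+1):ℝ))^α*(qs ω (n+1):ℝ))
      = 2^α*H*(∑ n ∈ Finset.range M, (b n:ℝ)*((qs ω (n+1):ℝ))^((1:ℝ)-α)) := by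
    rw [Finset.mul_sum]
    apply Finset.sum_congr rfl
    intro n _
    rw [hterm n]
    ring
  have hmain : |birkhoff φ ω N x - (N:ℝ)*μ| ≤ 2^α*H*((N:ℝ)^((1:ℝ)-α)*SB^α) := by
    refine le_trans (hb4 x) ?_
    rw [hTsum]
    apply mul_le_mul_of_nonneg_left hSQ1 (by positivity)
  -- final assembly
  have hHn : H ≤ holderNorm α φ := Stmt0.holderSemi_le_holderNorm α φ
  have hHn0 : 0 ≤ holderNorm α φ := le_trans hH0 hHn
  have key : 48*H ≤ 100*Real.log (1/γ)*holderNorm α φ := by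
    have k1 : holderNorm α φ ≤ Real.log (1/γ) * holderNorm α φ :=
      le_mul_of_one_le_left hHn0 hlogγ1
    linarith
  have h2α : (2:ℝ)^α ≤ 2 := by
    calc (2:ℝ)^α ≤ (2:ℝ)^(1:ℝ) := Real.rpow_le_rpow_of_exponent_le (by norm_num) hα.2
      _ = 2 := Real.rpow_one 2
  have hNe1 : (N:ℝ) ≠ 0 := ne_of_gt hN0
  have hNe2 : (N:ℝ)^α ≠ 0 := ne_of_gt (Real.rpow_pos_of_pos hN0 α)
  have hγne : γ ≠ 0 := ne_of_gt hγ
  have hNsub : (N:ℝ)^((1:ℝ)-α) = (N:ℝ)/(N:ℝ)^α := by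
    rw [Real.rpow_sub hN0, Real.rpow_one]
  have heq : (1/(N:ℝ))*birkhoff φ ω N x - μ = (1/(N:ℝ))*(birkhoff φ ω N x - (N:ℝ)*μ) := by
    field_simp
  have hfact : (0:ℝ) ≤ Real.log (N:ℝ)^(3*α)/(γ*(N:ℝ)^α) := by positivity
  calc |(1/(N:ℝ))*birkhoff φ ω N x - μ|
      = (1/(N:ℝ))*|birkhoff φ ω N x - (N:ℝ)*μ| := by
        rw [heq, abs_mul, abs_of_nonneg (by positivity : (0:ℝ) ≤ 1/(N:ℝ))]
    _ ≤ (1/(N:ℝ))*(2^α*H*((N:ℝ)^((1:ℝ)-α)*SB^α)) :=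
        mul_le_mul_of_nonneg_left hmain (by positivity)
    _ ≤ (1/(N:ℝ))*(2*H*((N:ℝ)^((1:ℝ)-α)*((24/γ) * Real.log (N:ℝ)^(3*α)))) := by
        have hrp : (0:ℝ) ≤ (N:ℝ)^((1:ℝ)-α) := le_of_lt (Real.rpow_pos_of_pos hN0 _)
        have m1 : (N:ℝ)^((1:ℝ)-α)*SB^α ≤ (N:ℝ)^((1:ℝ)-α)*((24/γ) * Real.log (N:ℝ)^(3*α)) :=
          mul_le_mul_of_nonneg_left hSBα hrp
        have m2 : 2^α*H ≤ 2*H := mul_le_mul_of_nonneg_right h2α hH0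
        have m3 : 2^α*H*((N:ℝ)^((1:ℝ)-α)*SB^α) ≤
            2*H*((N:ℝ)^((1:ℝ)-α)*((24/γ) * Real.log (N:ℝ)^(3*α))) := by
          apply mul_le_mul m2 m1 (by positivity) (by positivity)
        exact mul_le_mul_of_nonneg_left m3 (by positivity)
    _ = (48*H) * (Real.log (N:ℝ)^(3*α)/(γ*(N:ℝ)^α)) := by
        rw [hNsub]
        field_simp
        ring
    _ ≤ (100*Real.log (1/γ)*holderNorm α φ) * (Real.log (N:ℝ)^(3*α)/(γ*(N:ℝ)^α)) :=
        mul_le_mul_of_nonneg_right key hfact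
    _ = 100 * (1 / γ) * Real.log (1 / γ) * holderNorm α φ *
          Real.log (N : ℝ) ^ (3 * α) / (N : ℝ) ^ α := by
        field_simp
end
end

section
/- Let ω be irrational and let p/q be a best approximation to ω (equivalently, a principal convergent). Then there is an absolute constant C such that for every integer N ≥ 1, Σ_{1 ≤ |k| < q} |𝓔_N(kω)| ≤ C · q · (log q) / N, where 𝓔_N(t) = (1/N) Σ_{j=0}^{N−1} e^{2πi j t}. -/
open scoped BigOperators

noncomputable section

/-- The averaged exponential sum `𝓔_N(t) = (1/N) Σ_{j<N} e^{2πijt}`. -/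
def expSumAvg (N : ℕ) (t : ℝ) : ℂ :=
  (1 / (N : ℂ)) * ∑ j ∈ Finset.range N, Complex.exp (2 * (Real.pi : ℂ) * Complex.I * (j : ℂ) * (t : ℂ))


-- Auxiliary lemmas
lemma nint_nonneg (x : ℝ) : 0 ≤ nint x := abs_nonneg _

lemma nint_le (x : ℝ) (m : ℤ) : nint x ≤ |x - m| := by
  rcases le_or_gt (1/2 : ℝ) |x - m| with h | h
  · exact (abs_sub_round x).trans h
  · have h2 : |x - round x| ≤ 1/2 := abs_sub_round x
    have h1 : |(round x : ℝ) - m| < 1 := by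
      have : (round x : ℝ) - m = -(x - round x) + (x - m) := by ring
      rw [this]
      calc |-(x - round x) + (x - m)| ≤ |-(x - round x)| + |x - m| := abs_add_le _ _
        _ = |x - round x| + |x - m| := by rw [abs_neg]
        _ < 1 := by linarith
    have hrm : round x = m := by
      have := abs_lt.mp h1
      have h3 : -1 < round x - m ∧ round x - m < 1 := by
        constructor <;> [exact_mod_cast this.1; exact_mod_cast this.2]
      omega
    rw [nint, hrm]

lemma nint_neg (x : ℝ) : nint (-x) = nint x := by
  apply le_antisymm
  · calc nint (-x) ≤ |(-x) - (-(round x) : ℤ)| := nint_le _ _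
      _ = |x - round x| := by push_cast; rw [← abs_neg]; ring_nf
  · calc nint x ≤ |x - (-(round (-x)) : ℤ)| := nint_le _ _
      _ = |(-x) - round (-x)| := by push_cast; rw [← abs_neg]; ring_nf
    
lemma nint_add_int (x : ℝ) (n : ℤ) : nint (x + n) = nint x := by
  rw [nint, round_add_intCast, nint]; push_cast; ring_nf

lemma nint_pos_of_irr {ω : ℝ} (hω : Irrational ω) (k : ℤ) (hk : k ≠ 0) :
    0 < nint ((k : ℝ) * ω) := by
  rcases (nint_nonneg ((k:ℝ)*ω)).lt_or_eq with h | h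
  · exact h
  exfalso
  have h0 : (k:ℝ) * ω = round ((k:ℝ)*ω) := by
    have := abs_eq_zero.mp h.symm
    linarith [sub_eq_zero.mp this]
  exact ((hω.intCast_mul hk).ne_int _) h0

open Real in
lemma two_nint_le_abs_sin (t : ℝ) : 2 * nint t ≤ |Real.sin (π * t)| := by
  set u := t - round t with hu
  have hu2 : |u| ≤ 1/2 := abs_sub_round t
  have h1 : Real.sin (π * t) = (-1) ^ (round t) * Real.sin (π * u) := by
    have : π * t = π * u + (round t) * π := by rw [hu]; ring
    rw [this, Real.sin_add_int_mul_pi]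
  have h2 : |Real.sin (π * t)| = |Real.sin (π * u)| := by
    rw [h1, abs_mul]
    rcases Int.even_or_odd (round t) with he | ho
    · rw [he.neg_one_zpow]; simp
    · rw [ho.neg_one_zpow]; simp
  rw [h2]
  have h3 : |Real.sin (π * u)| = Real.sin (π * |u|) := by
    rcases le_or_gt 0 u with h | h
    · rw [abs_of_nonneg h]
      exact abs_of_nonneg (Real.sin_nonneg_of_nonneg_of_le_pi (by positivity)
        (by nlinarith [Real.pi_pos, abs_of_nonneg h]))
    · rw [abs_of_neg h]
      have hpos : 0 ≤ Real.sin (π * -u) := Real.sin_nonneg_of_nonneg_of_le_pi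
        (by nlinarith [Real.pi_pos]) (by nlinarith [Real.pi_pos, abs_of_neg h])
      have hneg : Real.sin (π * u) ≤ 0 := by
        have h' := hpos
        rw [show π * -u = -(π * u) by ring, Real.sin_neg] at h'
        linarith
      rw [abs_of_nonpos hneg, show π * -u = -(π * u) by ring, Real.sin_neg]
  rw [h3]
  have hs := Real.mul_le_sin (x := π * |u|) (by positivity)
    (by nlinarith [Real.pi_pos])
  calc 2 * nint t = 2 / π * (π * |u|) := by
        rw [nint, ← hu]; field_simp
    _ ≤ Real.sin (π * |u|) := hs

open Real in
lemma abs_expSumAvg_le {N : ℕ} (hN : 1 ≤ N) {t : ℝ} (ht : 0 < nint t) :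
    ‖expSumAvg N t‖ ≤ 1 / (2 * N * nint t) := by
  set z : ℂ := Complex.exp (2 * (π : ℂ) * Complex.I * (t : ℂ)) with hz
  have hterm : ∀ j : ℕ, Complex.exp (2 * (π : ℂ) * Complex.I * (j : ℂ) * (t : ℂ)) = z ^ j := by
    intro j
    rw [show (2 * (π:ℂ) * Complex.I * (j:ℂ) * (t:ℂ)) = (j:ℕ) * (2 * (π:ℂ) * Complex.I * (t:ℂ)) by
      push_cast; ring, Complex.exp_nat_mul]
  have habs_z : ‖z‖ = 1 := by
    rw [hz, show (2 * (π:ℂ) * Complex.I * (t:ℂ)) = ((2 * π * t : ℝ) : ℂ) * Complex.I by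
      push_cast; ring]
    exact Complex.norm_exp_ofReal_mul_I _
  have hne : (2 * (π:ℂ) * Complex.I) ≠ 0 :=
    mul_ne_zero (mul_ne_zero two_ne_zero (Complex.ofReal_ne_zero.mpr Real.pi_ne_zero))
      Complex.I_ne_zero
  have hz1 : z ≠ 1 := by
    intro h
    rw [hz, Complex.exp_eq_one_iff] at h
    obtain ⟨n, hn⟩ := h
    have ht' : (2*(π:ℂ)*Complex.I) * (t:ℂ) = (2*(π:ℂ)*Complex.I) * (n:ℂ) := by
      rw [show (2*(π:ℂ)*Complex.I) * (t:ℂ) = 2 * (π:ℂ) * Complex.I * (t:ℂ) by ring, hn]; ring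
    have ht'' : (t:ℂ) = (n:ℂ) := mul_left_cancel₀ hne ht'
    have htn : t = (n : ℝ) := by exact_mod_cast ht''
    rw [htn] at ht
    have h0 : nint ((n:ℝ)) = 0 := by
      have := nint_add_int 0 n
      simpa [nint] using this
    linarith
  have hsum : ∑ j ∈ Finset.range N, Complex.exp (2 * (π:ℂ) * Complex.I * (j:ℂ) * (t:ℂ))
      = (z ^ N - 1) / (z - 1) := by
    simp_rw [hterm]; exact geom_sum_eq hz1 N
  have hnum : ‖z ^ N - 1‖ ≤ 2 := by
    calc ‖z ^ N - 1‖ ≤ ‖z ^ N - 0‖ + ‖(0:ℂ) - 1‖ :=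
          norm_sub_le_norm_sub_add_norm_sub _ _ _
      _ = 2 := by simp [norm_pow, habs_z]; norm_num
  -- denominator
  set θ : ℝ := 2 * π * t with hθ
  have hzθ : z = Complex.exp ((θ:ℂ) * Complex.I) := by
    rw [hz, hθ]; push_cast; ring_nf
  have hden_eq : ‖z - 1‖ = 2 * |Real.sin (θ / 2)| := by
    rw [hzθ, Complex.exp_mul_I]
    rw [← Complex.ofReal_cos, ← Complex.ofReal_sin]
    rw [show ((Real.cos θ : ℝ):ℂ) + ((Real.sin θ:ℝ):ℂ) * Complex.I - 1
        = ((Real.cos θ - 1 : ℝ):ℂ) + ((Real.sin θ:ℝ):ℂ) * Complex.I by push_cast; ring]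
    rw [Complex.norm_add_mul_I]
    have hid : (Real.cos θ - 1)^2 + (Real.sin θ)^2 = (2 * |Real.sin (θ/2)|)^2 := by
      have h1 : Real.sin (θ/2)^2 + Real.cos (θ/2)^2 = 1 := Real.sin_sq_add_cos_sq _
      have h2 : Real.cos θ = Real.cos (θ/2)^2 - Real.sin (θ/2)^2 := by
        rw [show θ = 2 * (θ/2) by ring, Real.cos_two_mul']; ring_nf
      have h3 : Real.sin θ ^ 2 + Real.cos θ ^2 = 1 := by
        rw [add_comm]; exact Real.cos_sq_add_sin_sq _ ▸ (by rw [Real.cos_sq_add_sin_sq])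
      have habs : |Real.sin (θ/2)|^2 = Real.sin (θ/2)^2 := sq_abs _
      nlinarith [habs]
    rw [hid, Real.sqrt_sq (by positivity)]
  have hden : 4 * nint t ≤ ‖z - 1‖ := by
    rw [hden_eq, show θ / 2 = π * t by rw [hθ]; ring]
    have := two_nint_le_abs_sin t
    linarith
  -- combine
  have hNpos : (0:ℝ) < N := by exact_mod_cast hN
  have hden_pos : (0:ℝ) < ‖z - 1‖ := lt_of_lt_of_le (by positivity) hden
  have : ‖expSumAvg N t‖ = (1/N) * (‖z ^ N - 1‖ / ‖z - 1‖) := by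
    rw [expSumAvg, norm_mul, hsum, norm_div, norm_div]
    simp [Complex.norm_natCast]
  rw [this]
  have hfrac : ‖z ^ N - 1‖ / ‖z - 1‖ ≤ 2 / (4 * nint t) := by
    exact div_le_div₀ (by norm_num) hnum (by positivity) hden
  calc (1/(N:ℝ)) * (‖z ^ N - 1‖ / ‖z - 1‖)
      ≤ (1/(N:ℝ)) * (2 / (4 * nint t)) := by
        apply mul_le_mul_of_nonneg_left hfrac (by positivity)
    _ = 1 / (2 * N * nint t) := by field_simp; ring

lemma sep {ω : ℝ} {p : ℤ} {q : ℕ} (hq : 1 ≤ q)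
    (hpq : |(q : ℝ) * ω - (p : ℝ)| = nint ((q : ℝ) * ω))
    (hbest : ∀ j : ℕ, 1 ≤ j → j < q → nint ((j : ℝ) * ω) > nint ((q : ℝ) * ω))
    (k : ℤ) (hk0 : k ≠ 0) (hkq : k.natAbs < q) :
    nint (((k * p : ℤ) : ℝ) / q) / 3 ≤ nint ((k : ℝ) * ω) := by
  set δ := nint ((q : ℝ) * ω) with hδ
  set μ := nint (((k * p : ℤ) : ℝ) / q) with hμ
  have hqpos : (0 : ℝ) < q := by exact_mod_cast hq
  have hδ0 : 0 ≤ δ := nint_nonneg _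
  have hμ0 : 0 ≤ μ := nint_nonneg _
  set a := round ((k : ℝ) * ω) with ha
  have hkey : (q : ℝ) * nint ((k : ℝ) * ω) ≥ (q : ℝ) * μ - |(k : ℝ)| * δ := by
    have h1 : nint ((k : ℝ) * ω) = |(k : ℝ) * ω - a| := rfl
    have h2 : (q : ℝ) * |(k : ℝ) * ω - a| = |(k : ℝ) * ((q:ℝ) * ω - p) + ((k * p : ℤ) - (q:ℤ) * a : ℤ)| := by
      calc (q : ℝ) * |(k : ℝ) * ω - a| = |(q:ℝ)| * |(k : ℝ) * ω - a| := by rw [abs_of_pos hqpos]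
        _ = |(q:ℝ) * ((k : ℝ) * ω - a)| := (abs_mul _ _).symm
        _ = |(k : ℝ) * ((q:ℝ) * ω - p) + ((k * p : ℤ) - (q:ℤ) * a : ℤ)| := by
            congr 1; push_cast; ring
    have h3 : |(k : ℝ) * ((q:ℝ) * ω - p) + ((k * p : ℤ) - (q:ℤ) * a : ℤ)|
        ≥ |(((k * p : ℤ) - (q:ℤ) * a : ℤ) : ℝ)| - |(k:ℝ)| * δ := by
      have habs : |(k : ℝ) * ((q:ℝ) * ω - p)| = |(k:ℝ)| * δ := by
        rw [abs_mul, hpq]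
      have h8 : |(((k * p : ℤ) - (q:ℤ) * a : ℤ) : ℝ)|
          ≤ |(k : ℝ) * ((q:ℝ) * ω - p) + ((k * p : ℤ) - (q:ℤ) * a : ℤ)| + |(k : ℝ) * ((q:ℝ) * ω - p)| := by
        calc |(((k * p : ℤ) - (q:ℤ) * a : ℤ) : ℝ)|
            = |((k : ℝ) * ((q:ℝ) * ω - p) + ((k * p : ℤ) - (q:ℤ) * a : ℤ)) + (-((k : ℝ) * ((q:ℝ) * ω - p)))| := by
              congr 1; ring
          _ ≤ |(k : ℝ) * ((q:ℝ) * ω - p) + ((k * p : ℤ) - (q:ℤ) * a : ℤ)| + |(-((k : ℝ) * ((q:ℝ) * ω - p)))| := abs_add_le _ _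
          _ = |(k : ℝ) * ((q:ℝ) * ω - p) + ((k * p : ℤ) - (q:ℤ) * a : ℤ)| + |(k : ℝ) * ((q:ℝ) * ω - p)| := by rw [abs_neg]
      linarith
    have h4 : |(((k * p : ℤ) - (q:ℤ) * a : ℤ) : ℝ)| ≥ (q : ℝ) * μ := by
      have h5 : μ ≤ |((k * p : ℤ) : ℝ) / q - a| := nint_le _ a
      have h6 : (q:ℝ) * |((k * p : ℤ) : ℝ) / q - a| = |(((k * p : ℤ) - (q:ℤ) * a : ℤ) : ℝ)| := by
        calc (q:ℝ) * |((k * p : ℤ) : ℝ) / q - a| = |(q:ℝ)| * |((k * p : ℤ) : ℝ) / q - a| := by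
              rw [abs_of_pos hqpos]
          _ = |(q:ℝ) * (((k * p : ℤ) : ℝ) / q - a)| := (abs_mul _ _).symm
          _ = |(((k * p : ℤ) - (q:ℤ) * a : ℤ) : ℝ)| := by
              congr 1; push_cast; field_simp
      nlinarith
    rw [h1, h2]
    linarith
  have hkabs : |(k : ℝ)| ≤ (q : ℝ) := by
    have : (k.natAbs : ℝ) ≤ (q : ℝ) := by exact_mod_cast hkq.le
    rwa [Nat.cast_natAbs, Int.cast_abs] at this
  have hbest' : nint ((k : ℝ) * ω) > δ := by
    have h7 := hbest k.natAbs (by omega : 1 ≤ k.natAbs) hkq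
    have hcast : ((k.natAbs : ℕ) : ℝ) = |(k:ℝ)| := by rw [Nat.cast_natAbs, Int.cast_abs]
    rcases le_or_gt 0 k with h | h
    · have hk' : |(k:ℝ)| = (k:ℝ) := abs_of_nonneg (by exact_mod_cast h)
      rwa [hcast, hk'] at h7
    · have hk' : |(k:ℝ)| = -(k:ℝ) := abs_of_neg (by exact_mod_cast h)
      rw [hcast, hk'] at h7
      rwa [show -(k:ℝ) * ω = -((k:ℝ)*ω) by ring, nint_neg] at h7
  rcases le_or_gt (|(k:ℝ)| * δ) (2/3 * ((q:ℝ) * μ)) with hc | hc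
  · nlinarith
  · have : (q:ℝ) * δ > 2/3 * ((q:ℝ) * μ) := by nlinarith
    have : δ > 2/3 * μ := by nlinarith
    linarith

lemma nint_div_ge {q : ℕ} (hq : 1 ≤ q) (m : ℤ) (h1 : 1 ≤ m % q) :
    ((min (m % q) ((q:ℤ) - m % q) : ℤ) : ℝ) / q ≤ nint ((m : ℝ) / q) := by
  set r : ℤ := m % q with hr
  have hqpos : (0:ℤ) < (q:ℤ) := by exact_mod_cast hq
  have hrq : r < q := Int.emod_lt_of_pos m hqpos
  have hqR : (0:ℝ) < (q:ℝ) := by exact_mod_cast hq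
  have hdm : (q:ℤ) * (m / q) + r = m := Int.mul_ediv_add_emod m q
  have hx : (m : ℝ) / q = (r : ℝ) / q + ((m / q : ℤ) : ℝ) := by
    have hm : (m:ℝ) = (q:ℝ) * ((m/q : ℤ):ℝ) + (r:ℝ) := by exact_mod_cast hdm.symm
    rw [hm]
    field_simp
    ring
  rw [hx, nint_add_int]
  set b : ℤ := round ((r:ℝ)/q) with hb
  have hnint : nint ((r:ℝ)/q) = |(r:ℝ)/q - b| := rfl
  rw [hnint]
  have hr0 : (0:ℝ) < (r:ℝ) := by exact_mod_cast h1
  have hrq' : (r:ℝ) < q := by exact_mod_cast hrq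
  have hmin : ((min r ((q:ℤ) - r) : ℤ) : ℝ) = min ((r:ℝ)) ((q:ℝ) - r) := by
    push_cast; rfl
  rw [hmin]
  rcases le_or_gt b 0 with hb0 | hb1
  · have hbR : (b:ℝ) ≤ 0 := by exact_mod_cast hb0
    have habs : (r:ℝ)/q ≤ |(r:ℝ)/q - b| := le_trans (by linarith) (le_abs_self _)
    have hmle : min ((r:ℝ)) ((q:ℝ) - r) / q ≤ (r:ℝ)/q := by
      gcongr
      exact min_le_left _ _
    linarith
  · have hbR : (1:ℝ) ≤ (b:ℝ) := by exact_mod_cast hb1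
    have h3 : 1 - (r:ℝ)/q ≤ |(r:ℝ)/q - b| := by
      rw [abs_sub_comm]
      exact le_trans (by linarith) (le_abs_self _)
    have h4 : ((q:ℝ) - r)/q = 1 - (r:ℝ)/q := by field_simp
    have hmle : min ((r:ℝ)) ((q:ℝ) - r) / q ≤ ((q:ℝ) - r)/q := by
      gcongr
      exact min_le_right _ _
    linarith

/-- Lemma 2.1: if `p/q` is a best approximation to the irrational `ω`,
then `Σ_{1 ≤ |k| < q} |𝓔_N(kω)| ≤ C q log q / N` for an absolute constant `C`. -/
theorem stmt4 :
    ∃ C : ℝ, 0 < C ∧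
      ∀ (ω : ℝ) (p : ℤ) (q : ℕ),
        Irrational ω → 1 ≤ q → Int.gcd p (q : ℤ) = 1 →
        |(q : ℝ) * ω - (p : ℝ)| = nint ((q : ℝ) * ω) →
        (∀ j : ℕ, 1 ≤ j → j < q → nint ((j : ℝ) * ω) > nint ((q : ℝ) * ω)) →
        ∀ N : ℕ, 1 ≤ N →
          ∑ k ∈ (Finset.Ioo (-(q : ℤ)) (q : ℤ)).erase 0, ‖expSumAvg N ((k : ℝ) * ω)‖ ≤
            C * (q : ℝ) * Real.log (q : ℝ) / (N : ℝ) := by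
  refine ⟨15, by norm_num, ?_⟩
  intro ω p q hω hq hgcd hpq hbest N hN
  set S := (Finset.Ioo (-(q:ℤ)) (q:ℤ)).erase 0 with hS
  rcases eq_or_lt_of_le hq with hq1 | hq2
  · -- q = 1
    have hSempty : S = ∅ := by
      rw [hS, ← hq1]
      ext k
      simp only [Finset.mem_erase, Finset.mem_Ioo, Finset.notMem_empty, iff_false, not_and]
      push_cast
      omega
    rw [hSempty, Finset.sum_empty, ← hq1]
    push_cast
    simp [Real.log_one]
  -- q ≥ 2
  have hq0 : (0:ℝ) < q := by positivity
  have hN0 : (0:ℝ) < N := by exact_mod_cast hN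
  have hqz : (q:ℤ) ≠ 0 := by exact_mod_cast (by omega : q ≠ 0)
  have hcop : IsCoprime (q:ℤ) p := by
    rw [Int.isCoprime_iff_gcd_eq_one, Int.gcd_comm]
    exact hgcd
  set T := Finset.Ico (1:ℤ) (q:ℤ) with hT
  set g : ℤ → ℝ := fun r => 3 * (q:ℝ) / (2 * (N:ℝ) * ((min r ((q:ℤ) - r) : ℤ) : ℝ)) with hg
  have hfacts : ∀ k : ℤ, k ≠ 0 → k.natAbs < q → 1 ≤ (k*p) % q ∧ (k*p) % q < q := by
    intro k hk0 hkq
    have hlt : (k*p) % q < q := Int.emod_lt_of_pos _ (by exact_mod_cast (by omega : 0 < q))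
    have hge : 0 ≤ (k*p) % q := Int.emod_nonneg _ hqz
    have hne : (k*p) % q ≠ 0 := by
      intro h0
      have hdvd : (q:ℤ) ∣ k * p := Int.dvd_of_emod_eq_zero h0
      have hdk : (q:ℤ) ∣ k := hcop.dvd_of_dvd_mul_right hdvd
      have hle : (q:ℤ) ≤ |k| := Int.le_of_dvd (abs_pos.mpr hk0) ((dvd_abs _ _).mpr hdk)
      rw [Int.abs_eq_natAbs] at hle
      omega
    omega
  -- termwise bound
  have hterm : ∀ k ∈ S, ‖expSumAvg N ((k:ℝ)*ω)‖ ≤ g ((k*p) % q) := by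
    intro k hk
    rw [hS, Finset.mem_erase, Finset.mem_Ioo] at hk
    obtain ⟨hk0, hk1, hk2⟩ := hk
    have hkq : k.natAbs < q := by omega
    obtain ⟨hr1, hrq⟩ := hfacts k hk0 hkq
    set r : ℤ := (k*p) % q with hr
    have hmin1 : (1:ℤ) ≤ min r ((q:ℤ) - r) := by omega
    have hminR : (1:ℝ) ≤ ((min r ((q:ℤ) - r) : ℤ) : ℝ) := by exact_mod_cast hmin1
    have hμ := nint_div_ge hq (k*p) hr1
    have hsep' := sep hq hpq hbest k hk0 hkq
    have hpos : 0 < nint ((k:ℝ)*ω) := nint_pos_of_irr hω k hk0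
    have h1 := abs_expSumAvg_le hN hpos
    have hlow : ((min r ((q:ℤ) - r) : ℤ) : ℝ) ≤ 3 * (q:ℝ) * nint ((k:ℝ)*ω) := by
      have h3 : ((min r ((q:ℤ) - r) : ℤ) : ℝ) / q ≤ 3 * nint ((k:ℝ)*ω) := by
        calc ((min r ((q:ℤ) - r) : ℤ) : ℝ) / q ≤ nint (((k * p : ℤ) : ℝ) / q) := hμ
          _ ≤ 3 * nint ((k:ℝ)*ω) := by linarith
      rw [div_le_iff₀ hq0] at h3
      nlinarith
    refine h1.trans ?_
    rw [hg]
    simp only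
    rw [div_le_div_iff₀ (by positivity) (by positivity)]
    nlinarith [hpos, hN0, hq0]
  have hsum1 : ∑ k ∈ S, ‖expSumAvg N ((k:ℝ)*ω)‖ ≤ ∑ k ∈ S, g ((k*p) % q) :=
    Finset.sum_le_sum hterm
  -- decomposition of S
  have hST : S = Finset.Ioo (-(q:ℤ)) 0 ∪ T := by
    ext k
    simp only [hS, hT, Finset.mem_erase, Finset.mem_Ioo, Finset.mem_union, Finset.mem_Ico]
    omega
  have hdisj : Disjoint (Finset.Ioo (-(q:ℤ)) 0) T := by
    rw [Finset.disjoint_left]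
    intro k hk hk'
    rw [Finset.mem_Ioo] at hk
    rw [hT, Finset.mem_Ico] at hk'
    omega
  have hneg_sum : ∑ k ∈ Finset.Ioo (-(q:ℤ)) 0, g ((k*p) % q) = ∑ k ∈ T, g ((k*p) % q) := by
    apply Finset.sum_nbij' (i := fun k => -k) (j := fun k => -k)
    · intro k hk; rw [Finset.mem_Ioo] at hk; rw [hT, Finset.mem_Ico]; omega
    · intro k hk; rw [hT, Finset.mem_Ico] at hk; rw [Finset.mem_Ioo]; omega
    · intro k _; ring
    · intro k _; ring
    · intro k hk
      rw [Finset.mem_Ioo] at hk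
      have hk0 : k ≠ 0 := by omega
      obtain ⟨hr1, hrq⟩ := hfacts (-k) (by omega) (by omega)
      obtain ⟨hr1', hrq'⟩ := hfacts k hk0 (by omega)
      have hdm := Int.mul_ediv_add_emod ((-k)*p) (q:ℤ)
      have hkp : k * p = ((q:ℤ) - (-k*p) % q) + (q:ℤ) * (-((-k*p) / q) - 1) := by
        linear_combination hdm
      have hmod : (k*p) % q = (q:ℤ) - (-k*p) % q := by
        rw [hkp, Int.add_mul_emod_self_left, Int.emod_eq_of_lt (by omega) (by omega)]
      simp only [hg]
      rw [hmod]
      have harg : ((q:ℤ) - -k*p % q) ⊓ ((q:ℤ) - ((q:ℤ) - -k*p % q)) = (-k*p % q) ⊓ ((q:ℤ) - -k*p % q) := by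
        omega
      rw [harg]
  -- image bound on T
  have hginj : ∑ k ∈ T, g ((k*p) % q) ≤ ∑ r ∈ T, g r := by
    have hinj : ∀ k1 ∈ T, ∀ k2 ∈ T, (fun k => (k*p) % (q:ℤ)) k1 = (fun k => (k*p) % (q:ℤ)) k2 → k1 = k2 := by
      intro k1 hk1 k2 hk2 h
      rw [hT, Finset.mem_Ico] at hk1 hk2
      simp only at h
      have hmodeq : Int.ModEq (q:ℤ) (k1*p) (k2*p) := h
      have hdvd2 : (q:ℤ) ∣ (k2 - k1) * p := by rw [sub_mul]; exact Int.ModEq.dvd hmodeq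
      have hdk : (q:ℤ) ∣ k2 - k1 := hcop.dvd_of_dvd_mul_right hdvd2
      by_contra hne
      have hne0 : k2 - k1 ≠ 0 := by omega
      have hle : (q:ℤ) ≤ |k2 - k1| := Int.le_of_dvd (abs_pos.mpr hne0) ((dvd_abs _ _).mpr hdk)
      rw [Int.abs_eq_natAbs] at hle
      omega
    rw [← Finset.sum_image (g := fun k => (k*p) % (q:ℤ)) (f := g) hinj]
    apply Finset.sum_le_sum_of_subset_of_nonneg
    · intro r hrr
      rw [Finset.mem_image] at hrr
      obtain ⟨k, hk, hkr⟩ := hrr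
      rw [hT, Finset.mem_Ico] at hk ⊢
      obtain ⟨h1, h2⟩ := hfacts k (by omega) (by omega)
      subst hkr
      omega
    · intro r hrT _
      rw [hT, Finset.mem_Ico] at hrT
      have h1 : (1:ℝ) ≤ ((min r ((q:ℤ) - r) : ℤ) : ℝ) := by
        exact_mod_cast (by omega : (1:ℤ) ≤ min r ((q:ℤ)-r))
      rw [hg]
      simp only
      positivity
  -- reflection
  have hHrefl : ∑ r ∈ T, 1/((q:ℝ) - ((r:ℤ):ℝ)) = ∑ r ∈ T, 1/((r:ℤ):ℝ) := by
    apply Finset.sum_nbij' (i := fun r => (q:ℤ) - r) (j := fun r => (q:ℤ) - r)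
    · intro k hk; rw [hT, Finset.mem_Ico] at hk ⊢; omega
    · intro k hk; rw [hT, Finset.mem_Ico] at hk ⊢; omega
    · intro k _; ring
    · intro k _; ring
    · intro k _; push_cast; ring_nf
  have hgT : ∑ r ∈ T, g r ≤ 3*(q:ℝ)/(2*N) * (2 * ∑ r ∈ T, 1/((r:ℤ):ℝ)) := by
    have htw : ∀ r ∈ T, g r ≤ 3*(q:ℝ)/(2*N) * (1/((r:ℤ):ℝ) + 1/((q:ℝ) - ((r:ℤ):ℝ))) := by
      intro r hrT
      rw [hT, Finset.mem_Ico] at hrT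
      have hr0 : (0:ℝ) < ((r:ℤ):ℝ) := by exact_mod_cast (by omega : (0:ℤ) < r)
      have hqr0 : (0:ℝ) < (q:ℝ) - ((r:ℤ):ℝ) := by
        have : ((r:ℤ):ℝ) < (q:ℝ) := by exact_mod_cast hrT.2
        linarith
      have hr0' : (0:ℝ) < 1/((r:ℤ):ℝ) := by positivity
      have hqr0' : (0:ℝ) < 1/((q:ℝ) - ((r:ℤ):ℝ)) := by positivity
      rcases le_total r ((q:ℤ) - r) with hm | hm
      · have hmin : min r ((q:ℤ) - r) = r := min_eq_left hm
        rw [hg]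
        simp only
        rw [hmin]
        calc 3*(q:ℝ)/(2*(N:ℝ)*((r:ℤ):ℝ)) = 3*(q:ℝ)/(2*N) * (1/((r:ℤ):ℝ)) := by
              field_simp
          _ ≤ 3*(q:ℝ)/(2*N) * (1/((r:ℤ):ℝ) + 1/((q:ℝ) - ((r:ℤ):ℝ))) := by
              apply mul_le_mul_of_nonneg_left (by linarith) (by positivity)
      · have hmin : min r ((q:ℤ) - r) = (q:ℤ) - r := min_eq_right hm
        rw [hg]
        simp only
        rw [hmin]
        have hcast : ((((q:ℤ) - r):ℤ):ℝ) = (q:ℝ) - ((r:ℤ):ℝ) := by push_cast; ring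
        rw [hcast]
        calc 3*(q:ℝ)/(2*(N:ℝ)*((q:ℝ) - ((r:ℤ):ℝ))) = 3*(q:ℝ)/(2*N) * (1/((q:ℝ) - ((r:ℤ):ℝ))) := by
              field_simp
          _ ≤ 3*(q:ℝ)/(2*N) * (1/((r:ℤ):ℝ) + 1/((q:ℝ) - ((r:ℤ):ℝ))) := by
              apply mul_le_mul_of_nonneg_left (by linarith) (by positivity)
    calc ∑ r ∈ T, g r ≤ ∑ r ∈ T, 3*(q:ℝ)/(2*N) * (1/((r:ℤ):ℝ) + 1/((q:ℝ) - ((r:ℤ):ℝ))) :=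
          Finset.sum_le_sum htw
      _ = 3*(q:ℝ)/(2*N) * (∑ r ∈ T, 1/((r:ℤ):ℝ) + ∑ r ∈ T, 1/((q:ℝ) - ((r:ℤ):ℝ))) := by
          rw [← Finset.sum_add_distrib, ← Finset.mul_sum]
      _ = 3*(q:ℝ)/(2*N) * (2 * ∑ r ∈ T, 1/((r:ℤ):ℝ)) := by rw [hHrefl]; ring
  -- harmonic bound
  have hH : ∑ r ∈ T, 1/((r:ℤ):ℝ) ≤ 1 + Real.log q := by
    have hTimg : T = (Finset.Icc 1 (q-1)).image (Nat.cast : ℕ → ℤ) := by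
      ext k
      simp only [hT, Finset.mem_Ico, Finset.mem_image, Finset.mem_Icc]
      constructor
      · intro hk
        exact ⟨k.toNat, by omega, by omega⟩
      · rintro ⟨a, ha, rfl⟩
        omega
    have hsum2 : ∑ r ∈ T, 1/((r:ℤ):ℝ) = ∑ a ∈ Finset.Icc 1 (q-1), 1/((a:ℕ):ℝ) := by
      rw [hTimg, Finset.sum_image (by intro x _ y _ h; exact_mod_cast h)]
      apply Finset.sum_congr rfl
      intro a _
      norm_num
    have hharm : ∑ a ∈ Finset.Icc 1 (q-1), 1/((a:ℕ):ℝ) = ((harmonic (q-1) : ℚ) : ℝ) := by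
      rw [harmonic_eq_sum_Icc]
      push_cast
      simp [one_div]
    rw [hsum2, hharm]
    calc ((harmonic (q-1) : ℚ) : ℝ) ≤ 1 + Real.log (q-1 : ℕ) := harmonic_le_one_add_log (q-1)
      _ ≤ 1 + Real.log q := by
          have h1 : (0:ℝ) < ((q-1:ℕ):ℝ) := by
            have : 1 ≤ q - 1 := by omega
            exact_mod_cast (by omega : 0 < q - 1)
          have h2 : ((q-1:ℕ):ℝ) ≤ (q:ℝ) := by exact_mod_cast (by omega : q - 1 ≤ q)
          linarith [Real.log_le_log h1 h2]
  -- final arithmetic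
  have hlogq : (0:ℝ) < Real.log q := Real.log_pos (by exact_mod_cast hq2)
  have hlog1 : 1 + Real.log q ≤ 2.5 * Real.log q := by
    have h2 : Real.log 2 ≤ Real.log q := Real.log_le_log (by norm_num) (by exact_mod_cast hq2)
    nlinarith [Real.log_two_gt_d9]
  have hHnonneg : (0:ℝ) ≤ ∑ r ∈ T, 1/((r:ℤ):ℝ) := by
    apply Finset.sum_nonneg
    intro r hrT
    rw [hT, Finset.mem_Ico] at hrT
    have : (0:ℝ) < ((r:ℤ):ℝ) := by exact_mod_cast (by omega : (0:ℤ) < r)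
    positivity
  calc ∑ k ∈ S, ‖expSumAvg N ((k:ℝ)*ω)‖
      ≤ ∑ k ∈ S, g ((k*p) % q) := hsum1
    _ = ∑ k ∈ Finset.Ioo (-(q:ℤ)) 0, g ((k*p) % q) + ∑ k ∈ T, g ((k*p) % q) := by
        rw [hST, Finset.sum_union hdisj]
    _ = 2 * ∑ k ∈ T, g ((k*p) % q) := by rw [hneg_sum]; ring
    _ ≤ 2 * ∑ r ∈ T, g r := by linarith [hginj]
    _ ≤ 2 * (3*(q:ℝ)/(2*N) * (2 * ∑ r ∈ T, 1/((r:ℤ):ℝ))) := by linarith [hgT]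
    _ ≤ 2 * (3*(q:ℝ)/(2*N) * (2 * (1 + Real.log q))) := by
        have hc : (0:ℝ) ≤ 3*(q:ℝ)/(2*(N:ℝ)) := by positivity
        nlinarith [hH]
    _ = (6*(q:ℝ)*(1+Real.log q))/N := by field_simp; ring
    _ ≤ (6*(q:ℝ)*(2.5*Real.log q))/N := by
        apply (div_le_div_iff_of_pos_right hN0).mpr
        nlinarith [hlog1, hq0]
    _ = 15 * (q:ℝ) * Real.log q / N := by ring
end
end

section
/- Let γ > 0, A > 1, let ω ∈ T satisfy the Diophantine condition DC(T)_{γ,A}, let α ∈ (0,1], and let φ : T → ℝ be α-Hölder continuous. Then there is a constant C = C(γ, A) such that for all N ≥ 2, the Birkhoff sums of φ over the translation T_ω satisfy sup_{x∈T} |(1/N) φ^{(N)}(x) − ∫_T φ| ≤ C · ‖φ‖_α · (log N)^{α/A} / N^{α/A}. -/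
open scoped BigOperators

noncomputable section

/-- The Diophantine condition `DC(𝕋)_{γ,A}`: `‖kω‖ ≥ γ/|k|^A` for all `k ≠ 0`. -/
def DiophCondA (γ A ω : ℝ) : Prop :=
  ∀ k : ℤ, k ≠ 0 → nint ((k : ℝ) * ω) ≥ γ / |(k : ℝ)| ^ A

section Aux

lemma nint_le_abs (t : ℝ) (n : ℤ) : nint t ≤ |t - n| := round_le t n
lemma distT_nonneg (x y : ℝ) : 0 ≤ distT x y := abs_nonneg _
lemma distT_le_abs (x y : ℝ) : distT x y ≤ |x - y| := by
  simpa [distT] using nint_le_abs (x - y) 0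
lemma periodic_int' {φ : ℝ → ℝ} (hper : Function.Periodic φ 1) (k : ℤ) (y : ℝ) :
    φ (y + k) = φ y := by
  simpa using (hper.int_mul k) y
lemma eq_of_distT_zero {φ : ℝ → ℝ} (hper : Function.Periodic φ 1) {x y : ℝ}
    (h : distT x y = 0) : φ x = φ y := by
  have h0 : x - y - round (x - y) = 0 := by
    have := abs_eq_zero.mp h
    simpa [distT, nint] using this
  have hx : x = y + (round (x - y) : ℤ) := by linarith
  rw [hx, periodic_int' hper]

lemma supNorm_nonneg (φ : ℝ → ℝ) : 0 ≤ supNorm φ := by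
  refine Real.sSup_nonneg ?_
  rintro r ⟨x, rfl⟩
  exact abs_nonneg _

lemma holder_bound {φ : ℝ → ℝ} {α : ℝ} (hper : Function.Periodic φ 1)
    (hol : IsHolderT α φ) (hα : 0 < α) :
    0 ≤ holderSemi α φ ∧ ∀ x y : ℝ, |φ x - φ y| ≤ holderSemi α φ * |x - y| ^ α := by
  obtain ⟨C, hC⟩ := hol
  set S := {r : ℝ | ∃ x y : ℝ, distT x y ≠ 0 ∧ r = |φ x - φ y| / distT x y ^ α} with hS
  have hbdd : BddAbove S := by
    refine ⟨max C 0, ?_⟩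
    rintro r ⟨x, y, hd, rfl⟩
    have hdpos : 0 < distT x y := lt_of_le_of_ne (distT_nonneg x y) (Ne.symm hd)
    have hp : 0 < distT x y ^ α := Real.rpow_pos_of_pos hdpos α
    exact le_max_of_le_left ((div_le_iff₀ hp).mpr (hC x y))
  have hnn : 0 ≤ sSup S := by
    refine Real.sSup_nonneg ?_
    rintro r ⟨x, y, hd, rfl⟩
    exact div_nonneg (abs_nonneg _) (Real.rpow_nonneg (distT_nonneg x y) α)
  have key : ∀ x y : ℝ, |φ x - φ y| ≤ sSup S * distT x y ^ α := by
    intro x y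
    by_cases hd : distT x y = 0
    · rw [eq_of_distT_zero hper hd, hd, Real.zero_rpow hα.ne']
      simp
    · have hdpos : 0 < distT x y := lt_of_le_of_ne (distT_nonneg x y) (Ne.symm hd)
      have hp : 0 < distT x y ^ α := Real.rpow_pos_of_pos hdpos α
      have hmem : |φ x - φ y| / distT x y ^ α ∈ S := ⟨x, y, hd, rfl⟩
      exact (div_le_iff₀ hp).mp (le_csSup hbdd hmem)
  refine ⟨hnn, fun x y => (key x y).trans ?_⟩
  exact mul_le_mul_of_nonneg_left
    (Real.rpow_le_rpow (distT_nonneg x y) (distT_le_abs x y) hα.le) hnn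

lemma continuous_of_holder {φ : ℝ → ℝ} {Hs α : ℝ} (hα : 0 < α) (hHs : 0 ≤ Hs)
    (hH : ∀ x y : ℝ, |φ x - φ y| ≤ Hs * |x - y| ^ α) : Continuous φ := by
  rw [Metric.continuous_iff]
  intro b ε hε
  have hden : 0 < Hs + 1 := by linarith
  refine ⟨(ε / (Hs + 1)) ^ (α⁻¹), Real.rpow_pos_of_pos (by positivity) _, fun a ha => ?_⟩
  have h1 : dist (φ a) (φ b) ≤ Hs * |a - b| ^ α := by
    rw [Real.dist_eq]; exact hH a b
  have h2 : |a - b| ^ α ≤ ((ε / (Hs + 1)) ^ (α⁻¹)) ^ α := by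
    refine Real.rpow_le_rpow (abs_nonneg _) ?_ hα.le
    rw [Real.dist_eq] at ha; exact ha.le
  rw [Real.rpow_inv_rpow (by positivity) hα.ne'] at h2
  calc dist (φ a) (φ b) ≤ Hs * (ε / (Hs + 1)) := by nlinarith [h1, h2]
    _ < ε := by rw [mul_div_assoc']; rw [div_lt_iff₀ hden]; nlinarith

lemma sum_range_zmod {q : ℕ} [NeZero q] (F : ZMod q → ℝ) :
    ∑ j ∈ Finset.range q, F (j : ZMod q) = ∑ c : ZMod q, F c := by
  refine Finset.sum_nbij' (fun j => (j : ZMod q)) (fun c => c.val) ?_ ?_ ?_ ?_ ?_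
  · intro j hj; exact Finset.mem_univ _
  · intro c hc; exact Finset.mem_range.mpr c.val_lt
  · intro j hj; exact ZMod.val_natCast_of_lt (Finset.mem_range.mp hj)
  · intro c hc; exact (ZMod.natCast_val c).trans (ZMod.cast_id _ _)
  · intro j hj; rfl

lemma sum_orbit_eq_grid {φ : ℝ → ℝ} (hper : Function.Periodic φ 1) (p : ℤ) (q : ℕ)
    (hq : 0 < q) (hcop : Nat.Coprime p.natAbs q) (x : ℝ) :
    ∑ j ∈ Finset.range q, φ (x + (j : ℝ) * ((p : ℝ) / q)) =
      ∑ i ∈ Finset.range q, φ (x + (i : ℝ) / q) := by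
  haveI : NeZero q := ⟨hq.ne'⟩
  have hq0 : (q : ℝ) ≠ 0 := Nat.cast_ne_zero.mpr hq.ne'
  set G : ZMod q → ℝ := fun c => φ (x + (c.val : ℝ) / q) with hG
  have stepA : ∀ j : ℕ, φ (x + (j : ℝ) * ((p : ℝ) / q)) = G ((j : ZMod q) * (p : ZMod q)) := by
    intro j
    set c : ZMod q := (j : ZMod q) * (p : ZMod q) with hc
    have hcast : (((j : ℤ) * p - (c.val : ℤ) : ℤ) : ZMod q) = 0 := by
      push_cast
      rw [ZMod.natCast_val, ZMod.cast_id]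
      push_cast [hc]
      ring
    obtain ⟨k, hk⟩ := (ZMod.intCast_zmod_eq_zero_iff_dvd _ q).mp hcast
    have hkR : (j : ℝ) * (p : ℝ) - (c.val : ℝ) = (q : ℝ) * (k : ℝ) := by
      exact_mod_cast congrArg (fun z : ℤ => (z : ℝ)) hk
    have harg : x + (j : ℝ) * ((p : ℝ) / q) = (x + (c.val : ℝ) / q) + (k : ℝ) := by
      have h2 : (j : ℝ) * (p : ℝ) = (c.val : ℝ) + (q : ℝ) * (k : ℝ) := by linarith [hkR]
      generalize (c.val : ℝ) = v at h2 ⊢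
      field_simp
      linarith [h2]
    rw [harg, periodic_int' hper k]
  calc ∑ j ∈ Finset.range q, φ (x + (j : ℝ) * ((p : ℝ) / q))
      = ∑ j ∈ Finset.range q, G ((j : ZMod q) * (p : ZMod q)) := by
        exact Finset.sum_congr rfl fun j _ => stepA j
    _ = ∑ c : ZMod q, G (c * (p : ZMod q)) :=
        sum_range_zmod (fun c => G (c * (p : ZMod q)))
    _ = ∑ c : ZMod q, G c := by
        have habs : IsUnit ((p.natAbs : ZMod q)) := by
          refine ⟨ZMod.unitOfCoprime p.natAbs hcop, ZMod.coe_unitOfCoprime _ _⟩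
        have hu : IsUnit ((p : ℤ) : ZMod q) := by
          rcases Int.natAbs_eq p with h | h
          · rw [h, Int.cast_natCast]; exact habs
          · rw [h, Int.cast_neg, Int.cast_natCast]; exact habs.neg
        obtain ⟨u, hu'⟩ := hu
        calc ∑ c : ZMod q, G (c * (p : ZMod q))
            = ∑ c : ZMod q, G (u.mulRight c) := by
              refine Finset.sum_congr rfl fun c _ => ?_
              simp [Units.mulRight, hu']
          _ = ∑ c : ZMod q, G c := Equiv.sum_comp u.mulRight G
    _ = ∑ i ∈ Finset.range q, φ (x + (i : ℝ) / q) := by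
        rw [← sum_range_zmod (q := q) (fun c => G c)]
        refine Finset.sum_congr rfl fun j hj => ?_
        simp only [hG, ZMod.val_natCast_of_lt (Finset.mem_range.mp hj)]
lemma block {φ : ℝ → ℝ} (hcont : Continuous φ) (hper : Function.Periodic φ 1)
    {α Hs : ℝ} (hα : 0 < α) (hHs : 0 ≤ Hs)
    (hH : ∀ x y : ℝ, |φ x - φ y| ≤ Hs * |x - y| ^ α)
    (ω : ℝ) (p : ℤ) (q : ℕ) (hq : 0 < q) (hcop : Nat.Coprime p.natAbs q) (x : ℝ) :
    |birkhoff φ ω q x - q * ∫ t in (0:ℝ)..1, φ t| ≤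
      q * Hs * |(q : ℝ) * ω - p| ^ α + q * Hs * (1 / (q : ℝ)) ^ α := by
  have hqR : (0:ℝ) < q := Nat.cast_pos.mpr hq
  have hq0 : (q:ℝ) ≠ 0 := hqR.ne'
  set I : ℝ := ∫ t in (0:ℝ)..1, φ t with hI
  set δ : ℝ := |(q : ℝ) * ω - p| with hδ
  set S1 : ℝ := ∑ j ∈ Finset.range q, φ (x + (j : ℝ) * ((p : ℝ) / q)) with hS1
  -- Part 1
  have part1 : |birkhoff φ ω q x - S1| ≤ q * Hs * δ ^ α := by
    rw [birkhoff, hS1, ← Finset.sum_sub_distrib]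
    calc |∑ j ∈ Finset.range q, (φ (x + (j:ℝ) * ω) - φ (x + (j:ℝ) * ((p:ℝ)/q)))|
        ≤ ∑ j ∈ Finset.range q, |φ (x + (j:ℝ) * ω) - φ (x + (j:ℝ) * ((p:ℝ)/q))| :=
          Finset.abs_sum_le_sum_abs _ _
      _ ≤ ∑ j ∈ Finset.range q, Hs * δ ^ α := by
          refine Finset.sum_le_sum fun j hj => ?_
          have hjq : (j : ℝ) ≤ q := by
            exact_mod_cast (Finset.mem_range.mp hj).le
          have hdist : |(x + (j:ℝ) * ω) - (x + (j:ℝ) * ((p:ℝ)/q))| ≤ δ := by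
            have : (x + (j:ℝ) * ω) - (x + (j:ℝ) * ((p:ℝ)/q)) = (j:ℝ) * (ω - (p:ℝ)/q) := by
              ring
            rw [this, abs_mul, abs_of_nonneg (Nat.cast_nonneg j)]
            have h2 : |ω - (p:ℝ)/q| = δ / q := by
              rw [hδ, eq_div_iff hq0, ← abs_of_pos hqR, ← abs_mul]
              congr 1; rw [abs_of_pos hqR, sub_mul, div_mul_cancel₀ _ hq0]; ring
            rw [h2]
            calc (j:ℝ) * (δ/q) ≤ (q:ℝ) * (δ/q) := by
                  exact mul_le_mul_of_nonneg_right hjq (by positivity)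
              _ = δ := by field_simp
          calc |φ (x + (j:ℝ) * ω) - φ (x + (j:ℝ) * ((p:ℝ)/q))|
              ≤ Hs * |(x + (j:ℝ) * ω) - (x + (j:ℝ) * ((p:ℝ)/q))| ^ α := hH _ _
            _ ≤ Hs * δ ^ α := by
                exact mul_le_mul_of_nonneg_left
                  (Real.rpow_le_rpow (abs_nonneg _) hdist hα.le) hHs
      _ = q * Hs * δ ^ α := by
          rw [Finset.sum_const, Finset.card_range, nsmul_eq_mul]; ring
  -- Part 2
  have part2 : S1 = ∑ i ∈ Finset.range q, φ (x + (i : ℝ) / q) :=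
    sum_orbit_eq_grid hper p q hq hcop x
  -- Part 3
  have hint : ∀ u v : ℝ, IntervalIntegrable (fun t => φ (x + t)) MeasureTheory.volume u v :=
    fun u v => (hcont.comp (continuous_const.add continuous_id)).intervalIntegrable u v
  have hIx : (∫ t in (0:ℝ)..1, φ (x + t)) = I := by
    rw [intervalIntegral.integral_comp_add_left φ x]
    have := hper.intervalIntegral_add_eq x 0
    simpa using this
  have hsum : ∑ i ∈ Finset.range q, (∫ t in ((i:ℝ)/q)..(((i:ℕ)+1:ℝ)/q), φ (x + t)) = I := by
    have := intervalIntegral.sum_integral_adjacent_intervals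
      (a := fun i : ℕ => (i : ℝ)/q) (n := q) (f := fun t => φ (x + t))
      (μ := MeasureTheory.volume) (fun k _ => hint _ _)
    simp only [Nat.cast_zero, zero_div] at this
    rw [div_self hq0] at this
    rw [← hIx, ← this]
    push_cast
    rfl
  have part3 : |(∑ i ∈ Finset.range q, φ (x + (i : ℝ) / q)) - q * I| ≤
      q * Hs * (1 / (q : ℝ)) ^ α := by
    have keyi : ∀ i ∈ Finset.range q,
        |φ (x + (i:ℝ)/q) - q * ∫ t in ((i:ℝ)/q)..(((i:ℕ)+1:ℝ)/q), φ (x + t)| ≤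
          Hs * (1 / (q:ℝ)) ^ α := by
      intro i _
      have hle : (i:ℝ)/q ≤ ((i:ℝ)+1)/q := by gcongr <;> linarith
      set J : ℝ := ∫ t in ((i:ℝ)/q)..(((i:ℕ)+1:ℝ)/q), φ (x + t) with hJ
      have hconst : (∫ t in ((i:ℝ)/q)..(((i:ℕ)+1:ℝ)/q), φ (x + (i:ℝ)/q)) =
          (1/(q:ℝ)) * φ (x + (i:ℝ)/q) := by
        rw [intervalIntegral.integral_const, smul_eq_mul]
        congr 1
        push_cast
        field_simp
        ring
      have hsub : (∫ t in ((i:ℝ)/q)..(((i:ℕ)+1:ℝ)/q), (φ (x + (i:ℝ)/q) - φ (x + t))) =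
          (1/(q:ℝ)) * φ (x + (i:ℝ)/q) - J := by
        have h := intervalIntegral.integral_sub (f := fun _ => φ (x + (i:ℝ)/q))
          (g := fun t => φ (x + t)) (a := (i:ℝ)/q) (b := (((i:ℕ)+1:ℝ)/q))
          (μ := MeasureTheory.volume) intervalIntegrable_const (hint _ _)
        simp only [intervalIntegral.integral_const, smul_eq_mul] at h
        have h2 : (1/(q:ℝ)) * φ (x + (i:ℝ)/q) =
            ((((i:ℕ)+1:ℝ)/q) - (i:ℝ)/q) * φ (x + (i:ℝ)/q) := by
          congr 1
          push_cast
          field_simp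
          ring
        rw [h2]
        exact h
      have hbound : |∫ t in ((i:ℝ)/q)..(((i:ℕ)+1:ℝ)/q), (φ (x + (i:ℝ)/q) - φ (x + t))| ≤
          (Hs * (1/(q:ℝ)) ^ α) * |(((i:ℕ)+1:ℝ)/q) - (i:ℝ)/q| := by
        rw [← Real.norm_eq_abs]
        refine intervalIntegral.norm_integral_le_of_norm_le_const ?_
        intro t ht
        push_cast at ht
        rw [Set.uIoc_of_le hle] at ht
        obtain ⟨ht1, ht2⟩ := ht
        rw [Real.norm_eq_abs]
        have hd : |(x + (i:ℝ)/q) - (x + t)| ≤ 1/(q:ℝ) := by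
          have : (x + (i:ℝ)/q) - (x + t) = (i:ℝ)/q - t := by ring
          rw [this, abs_of_nonpos (by linarith)]
          have : ((i:ℝ)+1)/q - (i:ℝ)/q = 1/(q:ℝ) := by field_simp; ring
          linarith
        calc |φ (x + (i:ℝ)/q) - φ (x + t)| ≤ Hs * |(x + (i:ℝ)/q) - (x + t)| ^ α := hH _ _
          _ ≤ Hs * (1/(q:ℝ)) ^ α :=
            mul_le_mul_of_nonneg_left (Real.rpow_le_rpow (abs_nonneg _) hd hα.le) hHs
      have habs : |(((i:ℕ)+1:ℝ)/q) - (i:ℝ)/q| = 1/(q:ℝ) := by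
        push_cast
        rw [abs_of_nonneg (by linarith)]
        field_simp
        ring
      have hfinal : φ (x + (i:ℝ)/q) - q * J =
          q * ((1/(q:ℝ)) * φ (x + (i:ℝ)/q) - J) := by
        field_simp
      rw [hfinal, ← hsub, abs_mul, abs_of_pos hqR]
      calc (q:ℝ) * |∫ t in ((i:ℝ)/q)..(((i:ℕ)+1:ℝ)/q), (φ (x + (i:ℝ)/q) - φ (x + t))|
          ≤ (q:ℝ) * ((Hs * (1/(q:ℝ)) ^ α) * |(((i:ℕ)+1:ℝ)/q) - (i:ℝ)/q|) :=
            mul_le_mul_of_nonneg_left hbound hqR.le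
        _ = Hs * (1/(q:ℝ)) ^ α := by rw [habs]; field_simp
    have hsplit : (∑ i ∈ Finset.range q, φ (x + (i : ℝ) / q)) - q * I =
        ∑ i ∈ Finset.range q,
          (φ (x + (i:ℝ)/q) - q * ∫ t in ((i:ℝ)/q)..(((i:ℕ)+1:ℝ)/q), φ (x + t)) := by
      rw [Finset.sum_sub_distrib, ← Finset.mul_sum, hsum]
    rw [hsplit]
    calc |∑ i ∈ Finset.range q,
          (φ (x + (i:ℝ)/q) - q * ∫ t in ((i:ℝ)/q)..(((i:ℕ)+1:ℝ)/q), φ (x + t))|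
        ≤ ∑ i ∈ Finset.range q,
          |φ (x + (i:ℝ)/q) - q * ∫ t in ((i:ℝ)/q)..(((i:ℕ)+1:ℝ)/q), φ (x + t)| :=
          Finset.abs_sum_le_sum_abs _ _
      _ ≤ ∑ i ∈ Finset.range q, Hs * (1/(q:ℝ)) ^ α := Finset.sum_le_sum keyi
      _ = q * Hs * (1/(q:ℝ)) ^ α := by
          rw [Finset.sum_const, Finset.card_range, nsmul_eq_mul]; ring
  calc |birkhoff φ ω q x - q * I|
      ≤ |birkhoff φ ω q x - S1| + |S1 - q * I| := abs_sub_le _ _ _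
    _ ≤ q * Hs * δ ^ α + q * Hs * (1 / (q : ℝ)) ^ α := by
        refine add_le_add part1 ?_
        rw [part2]
        exact part3

lemma birkhoff_add (φ : ℝ → ℝ) (ω : ℝ) (a b : ℕ) (x : ℝ) :
    birkhoff φ ω (a + b) x = birkhoff φ ω a x + birkhoff φ ω b (x + (a : ℝ) * ω) := by
  induction b with
  | zero => simp [birkhoff]
  | succ n ih =>
      have h2 : birkhoff φ ω (n + 1) (x + (a : ℝ) * ω) =
          birkhoff φ ω n (x + (a : ℝ) * ω) + φ (x + (a : ℝ) * ω + (n : ℝ) * ω) := by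
        rw [birkhoff, Finset.sum_range_succ, ← birkhoff]
      rw [show a + (n + 1) = (a + n) + 1 from rfl, birkhoff, Finset.sum_range_succ,
        ← birkhoff, ih, h2, add_assoc]
      congr 2
      push_cast
      ring

lemma birkhoff_mul (φ : ℝ → ℝ) (ω : ℝ) (q m : ℕ) (x : ℝ) :
    birkhoff φ ω (q * m) x =
      ∑ i ∈ Finset.range m, birkhoff φ ω q (x + ((i * q : ℕ) : ℝ) * ω) := by
  induction m with
  | zero => simp [birkhoff]
  | succ n ih =>
      have : q * (n + 1) = q * n + q := by ring
      rw [this, birkhoff_add, ih, Finset.sum_range_succ]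
      congr 2
      push_cast
      ring

set_option maxHeartbeats 1000000 in
lemma main_induction (γ A : ℝ) (hγ : 0 < γ) (hA : 1 < A) {ω α : ℝ} {φ : ℝ → ℝ}
    (hdio : DiophCondA γ A ω) (hα : 0 < α) (hα1 : α ≤ 1)
    (hper : Function.Periodic φ 1) (hcont : Continuous φ)
    {Hs : ℝ} (hHs : 0 ≤ Hs) (hH : ∀ x y : ℝ, |φ x - φ y| ≤ Hs * |x - y| ^ α) :
    ∀ L : ℕ, ∀ x : ℝ,
      |birkhoff φ ω L x - L * ∫ t in (0:ℝ)..1, φ t| ≤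
        (2 * max 1 (γ ^ (-(1/A))) / (1 - (2:ℝ) ^ (-(1 - 1/A)))) * Hs * (L : ℝ) ^ (1 - α/A) := by
  have hA0 : (0:ℝ) < A := by linarith
  set g : ℝ := max 1 (γ ^ (-(1/A))) with hg
  set c : ℝ := (2:ℝ) ^ (-(1 - 1/A)) with hc
  set K : ℝ := 2 * g / (1 - c) with hK
  set I : ℝ := ∫ t in (0:ℝ)..1, φ t with hI
  have h1A : 1/A < 1 := (div_lt_one hA0).mpr hA
  have hc1 : c < 1 := Real.rpow_lt_one_of_one_lt_of_neg one_lt_two (by linarith)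
  have hc0 : 0 < c := Real.rpow_pos_of_pos two_pos _
  have hg1 : (1:ℝ) ≤ g := le_max_left _ _
  have hKpos : 0 < K := by
    apply div_pos (by linarith) (by linarith)
  have hαA : α/A < 1 := by
    rw [div_lt_one hA0]; linarith
  have hs0 : 0 < 1 - α/A := by linarith
  have hαA0 : 0 < α/A := div_pos hα hA0
  -- the key constant identity
  have hKc : 2 * g + K * c = K := by
    have h1c : (1:ℝ) - c ≠ 0 := by linarith
    rw [hK]
    field_simp
    ring
  intro L
  induction L using Nat.strong_induction_on with
  | _ L IH =>
    intro x
    rcases Nat.eq_zero_or_pos L with hL0 | hL1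
    · subst hL0
      simp [birkhoff, Real.zero_rpow hs0.ne']
    -- Dirichlet approximation
    obtain ⟨ρ, hρ, hρden⟩ := Real.exists_rat_abs_sub_le_and_den_le ω hL1
    set q : ℕ := ρ.den with hqdef
    set p : ℤ := ρ.num with hpdef
    have hq : 0 < q := ρ.pos
    have hqR : (0:ℝ) < q := Nat.cast_pos.mpr hq
    have hq0 : (q:ℝ) ≠ 0 := hqR.ne'
    have hcop : Nat.Coprime p.natAbs q := ρ.reduced
    have hqL : q ≤ L := hρden
    have hLR : (0:ℝ) < L := Nat.cast_pos.mpr hL1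
    set δ : ℝ := |(q : ℝ) * ω - p| with hδ
    have hδcast : (ρ : ℝ) = (p : ℝ) / q := by
      rw [hpdef, hqdef, Rat.cast_def]
    have hδle : δ ≤ 1 / ((L:ℝ) + 1) := by
      have h1 : δ = (q:ℝ) * |ω - (p:ℝ)/q| := by
        rw [hδ, ← abs_of_pos hqR, ← abs_mul]
        congr 1
        rw [abs_of_pos hqR, mul_sub, mul_div_assoc', mul_div_cancel_left₀ _ hq0]
      rw [h1]
      calc (q:ℝ) * |ω - (p:ℝ)/q| ≤ (q:ℝ) * (1 / (((L:ℝ) + 1) * q)) := by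
            refine mul_le_mul_of_nonneg_left ?_ hqR.le
            rw [← hδcast]
            exact_mod_cast hρ
        _ = 1 / ((L:ℝ) + 1) := by field_simp
    have hδq : δ ≤ 1 / (q:ℝ) := by
      refine hδle.trans ?_
      have hqL1 : (q:ℝ) ≤ (L:ℝ) + 1 := by
        have : (q:ℝ) ≤ (L:ℝ) := Nat.cast_le.mpr hqL
        linarith
      exact one_div_le_one_div_of_le hqR hqL1
    -- Diophantine lower bound
    have hdioq : γ / (q:ℝ) ^ A ≤ δ := by
      have hne : (q:ℤ) ≠ 0 := by exact_mod_cast hq.ne'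
      have h1 := hdio (q : ℤ) hne
      have h2 : nint (((q:ℤ):ℝ) * ω) ≤ δ := by
        rw [hδ]
        exact_mod_cast nint_le_abs ((q:ℝ) * ω) p
      have h3 : |((q:ℤ):ℝ)| = (q:ℝ) := by
        push_cast
        exact abs_of_pos hqR
      rw [h3] at h1
      push_cast at h1 h2
      linarith [h1, h2]
    have hpow : γ * (L:ℝ) ≤ (q:ℝ) ^ A := by
      have hqA : (0:ℝ) < (q:ℝ) ^ A := Real.rpow_pos_of_pos hqR _
      have h1 : γ / (q:ℝ) ^ A ≤ 1 / ((L:ℝ) + 1) := le_trans hdioq hδle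
      rw [div_le_div_iff₀ hqA (by linarith)] at h1
      nlinarith [h1]
    -- bound (1/q)^α ≤ (γ L)^(-(α/A))
    have hqinv : (1 / (q:ℝ)) ^ α ≤ (γ * (L:ℝ)) ^ (-(α/A)) := by
      have hγL : (0:ℝ) < γ * L := by positivity
      have step1 : (γ * (L:ℝ)) ^ (α/A) ≤ (q:ℝ) ^ α := by
        have h2 : ((q:ℝ) ^ A) ^ (α/A) = (q:ℝ) ^ α := by
          rw [← Real.rpow_mul hqR.le]
          congr 1
          field_simp
        rw [← h2]
        exact Real.rpow_le_rpow hγL.le hpow hαA0.le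
      have hpos1 : (0:ℝ) < (γ * (L:ℝ)) ^ (α/A) := Real.rpow_pos_of_pos hγL _
      rw [one_div, Real.inv_rpow hqR.le, Real.rpow_neg hγL.le]
      exact inv_anti₀ hpos1 step1
    have hδpow : δ ^ α ≤ (1 / (q:ℝ)) ^ α :=
      Real.rpow_le_rpow (abs_nonneg _) hδq hα.le
    -- division with remainder
    set m : ℕ := L / q with hm
    set r : ℕ := L % q with hr
    have hmr : q * m + r = L := Nat.div_add_mod L q
    have hm1 : 1 ≤ m := (Nat.one_le_div_iff hq).mpr hqL
    have hrq : r < q := Nat.mod_lt _ hq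
    have hrL : r < L := lt_of_lt_of_le hrq hqL
    have h2r : 2 * r + 1 ≤ L := by
      have : q * 1 ≤ q * m := Nat.mul_le_mul_left q hm1
      omega
    -- block estimate for each block
    have hblock : ∀ y : ℝ, |birkhoff φ ω q y - q * I| ≤
        2 * (q:ℝ) * Hs * (γ * (L:ℝ)) ^ (-(α/A)) := by
      intro y
      have h1 := block hcont hper hα hHs hH ω p q hq hcop y
      have h2 : (q:ℝ) * Hs * δ ^ α + (q:ℝ) * Hs * (1/(q:ℝ)) ^ α ≤
          2 * (q:ℝ) * Hs * (γ * (L:ℝ)) ^ (-(α/A)) := by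
        have hb1 : δ ^ α ≤ (γ * (L:ℝ)) ^ (-(α/A)) := le_trans hδpow hqinv
        nlinarith [mul_le_mul_of_nonneg_left hb1 (by positivity : (0:ℝ) ≤ (q:ℝ) * Hs),
          mul_le_mul_of_nonneg_left hqinv (by positivity : (0:ℝ) ≤ (q:ℝ) * Hs)]
      exact le_trans h1 h2
    -- decomposition
    have hdecomp : birkhoff φ ω L x - L * I =
        (∑ i ∈ Finset.range m,
          (birkhoff φ ω q (x + ((i * q : ℕ) : ℝ) * ω) - q * I)) +
        (birkhoff φ ω r (x + ((q * m : ℕ) : ℝ) * ω) - r * I) := by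
      rw [Finset.sum_sub_distrib, Finset.sum_const, Finset.card_range, nsmul_eq_mul]
      have hsplit : birkhoff φ ω L x = birkhoff φ ω (q * m) x +
          birkhoff φ ω r (x + ((q * m : ℕ) : ℝ) * ω) := by
        rw [← hmr]
        exact birkhoff_add φ ω (q * m) r x
      rw [hsplit, birkhoff_mul]
      have hLcast : (L:ℝ) = (q:ℝ) * m + r := by
        rw [← hmr]; push_cast; ring
      rw [hLcast]
      ring
    -- putting it together
    have hsum_bound : |birkhoff φ ω L x - L * I| ≤
        (m:ℝ) * (2 * (q:ℝ) * Hs * (γ * (L:ℝ)) ^ (-(α/A))) + K * Hs * (r:ℝ) ^ (1 - α/A) := by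
      rw [hdecomp]
      refine le_trans (abs_add_le _ _) ?_
      refine add_le_add ?_ (IH r hrL _)
      refine le_trans (Finset.abs_sum_le_sum_abs _ _) ?_
      refine le_trans (Finset.sum_le_sum fun i _ => hblock (x + ((i * q : ℕ) : ℝ) * ω)) ?_
      rw [Finset.sum_const, Finset.card_range, nsmul_eq_mul]
    -- first term
    have hterm1 : (m:ℝ) * (2 * (q:ℝ) * Hs * (γ * (L:ℝ)) ^ (-(α/A))) ≤
        2 * g * Hs * (L:ℝ) ^ (1 - α/A) := by
      have hmq : (m:ℝ) * (q:ℝ) ≤ (L:ℝ) := by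
        have : q * m ≤ L := by omega
        have h2 : ((q * m : ℕ) : ℝ) ≤ (L:ℝ) := Nat.cast_le.mpr this
        push_cast at h2
        linarith
      have hmulr : (γ * (L:ℝ)) ^ (-(α/A)) = γ ^ (-(α/A)) * (L:ℝ) ^ (-(α/A)) :=
        Real.mul_rpow hγ.le hLR.le
      have hγg : γ ^ (-(α/A)) ≤ g := by
        rcases le_total 1 γ with h | h
        · exact le_trans (Real.rpow_le_one_of_one_le_of_nonpos h (by linarith)) hg1
        · refine le_trans ?_ (le_max_right _ _)
          refine Real.rpow_le_rpow_of_exponent_ge hγ h ?_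
          have hdd : α / A ≤ 1 / A := by gcongr
          linarith
      have hLL : (L:ℝ) * (L:ℝ) ^ (-(α/A)) = (L:ℝ) ^ (1 - α/A) := by
        rw [show (1 - α/A) = 1 + (-(α/A)) by ring, Real.rpow_add hLR, Real.rpow_one]
      have t1 : (m:ℝ) * (q:ℝ) * (γ ^ (-(α/A)) * (L:ℝ) ^ (-(α/A))) ≤
          (L:ℝ) * (g * (L:ℝ) ^ (-(α/A))) := by
        refine mul_le_mul hmq ?_
          (mul_nonneg (Real.rpow_nonneg hγ.le _) (Real.rpow_nonneg hLR.le _)) hLR.le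
        exact mul_le_mul_of_nonneg_right hγg (Real.rpow_nonneg hLR.le _)
      calc (m:ℝ) * (2 * (q:ℝ) * Hs * (γ * (L:ℝ)) ^ (-(α/A)))
          = 2 * Hs * ((m:ℝ) * (q:ℝ) * (γ ^ (-(α/A)) * (L:ℝ) ^ (-(α/A)))) := by
            rw [hmulr]; ring
        _ ≤ 2 * Hs * ((L:ℝ) * (g * (L:ℝ) ^ (-(α/A)))) :=
            mul_le_mul_of_nonneg_left t1 (by positivity)
        _ = 2 * g * Hs * ((L:ℝ) * (L:ℝ) ^ (-(α/A))) := by ring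
        _ = 2 * g * Hs * (L:ℝ) ^ (1 - α/A) := by rw [hLL]
    -- second term
    have hterm2 : K * Hs * (r:ℝ) ^ (1 - α/A) ≤ K * Hs * ((L:ℝ) ^ (1 - α/A) * c) := by
      have hr2 : (r:ℝ) ≤ (L:ℝ) / 2 := by
        have h := (Nat.cast_le (α := ℝ)).mpr h2r
        push_cast at h
        linarith
      have hrs : (r:ℝ) ^ (1 - α/A) ≤ ((L:ℝ)/2) ^ (1 - α/A) :=
        Real.rpow_le_rpow (Nat.cast_nonneg r) hr2 hs0.le
      have hdiv : ((L:ℝ)/2) ^ (1 - α/A) = (L:ℝ) ^ (1 - α/A) * (2:ℝ) ^ (-(1 - α/A)) := by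
        rw [Real.div_rpow (Nat.cast_nonneg L) (by norm_num), Real.rpow_neg (by norm_num)]
        ring
      have hcc : (2:ℝ) ^ (-(1 - α/A)) ≤ c := by
        rw [hc]
        apply Real.rpow_le_rpow_of_exponent_le one_le_two
        have hdd : α / A ≤ 1 / A := by gcongr
        linarith
      calc K * Hs * (r:ℝ) ^ (1 - α/A)
          ≤ K * Hs * ((L:ℝ) ^ (1 - α/A) * (2:ℝ) ^ (-(1 - α/A))) :=
            mul_le_mul_of_nonneg_left (hrs.trans_eq hdiv) (by positivity)
        _ ≤ K * Hs * ((L:ℝ) ^ (1 - α/A) * c) := by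
            refine mul_le_mul_of_nonneg_left ?_ (by positivity)
            exact mul_le_mul_of_nonneg_left hcc (by positivity)
    -- combine
    have hfin : 2 * g * Hs * (L:ℝ) ^ (1 - α/A) + K * Hs * ((L:ℝ) ^ (1 - α/A) * c) =
        K * Hs * (L:ℝ) ^ (1 - α/A) := by
      have h1 : 2 * g * Hs * (L:ℝ) ^ (1 - α/A) + K * Hs * ((L:ℝ) ^ (1 - α/A) * c) =
          (2 * g + K * c) * (Hs * (L:ℝ) ^ (1 - α/A)) := by ring
      rw [h1, hKc]
      ring
    calc |birkhoff φ ω L x - L * I|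
        ≤ (m:ℝ) * (2 * (q:ℝ) * Hs * (γ * (L:ℝ)) ^ (-(α/A))) +
            K * Hs * (r:ℝ) ^ (1 - α/A) := hsum_bound
      _ ≤ 2 * g * Hs * (L:ℝ) ^ (1 - α/A) + K * Hs * ((L:ℝ) ^ (1 - α/A) * c) :=
          add_le_add hterm1 hterm2
      _ = K * Hs * (L:ℝ) ^ (1 - α/A) := hfin

end Aux

/-- bound (2.11): for `ω ∈ DC(𝕋)_{γ,A}` and `φ` `α`-Hölder,
`sup_x |(1/N) φ^(N)(x) − ∫ φ| ≤ C(γ,A) ‖φ‖_α (log N)^{α/A}/N^{α/A}`. -/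
theorem stmt8 (γ A : ℝ) (hγ : 0 < γ) (hA : 1 < A) :
    ∃ C : ℝ, 0 < C ∧
      ∀ (ω α : ℝ) (φ : ℝ → ℝ),
        DiophCondA γ A ω → α ∈ Set.Ioc (0 : ℝ) 1 → Function.Periodic φ 1 → IsHolderT α φ →
        ∀ N : ℕ, 2 ≤ N → ∀ x : ℝ,
          |(1 / (N : ℝ)) * birkhoff φ ω N x - ∫ t in (0:ℝ)..1, φ t| ≤
            C * holderNorm α φ * Real.log (N : ℝ) ^ (α / A) / (N : ℝ) ^ (α / A) := by
  have hA0 : (0:ℝ) < A := by linarith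
  set g : ℝ := max 1 (γ ^ (-(1/A))) with hg
  set c : ℝ := (2:ℝ) ^ (-(1 - 1/A)) with hc
  set K : ℝ := 2 * g / (1 - c) with hK
  have h1A : 1/A < 1 := (div_lt_one hA0).mpr hA
  have hc1 : c < 1 := Real.rpow_lt_one_of_one_lt_of_neg one_lt_two (by linarith)
  have hg1 : (1:ℝ) ≤ g := le_max_left _ _
  have hKpos : 0 < K := div_pos (by linarith) (by linarith)
  have hlog2 : (0:ℝ) < Real.log 2 := Real.log_pos one_lt_two
  have hlog2le1 : Real.log 2 ≤ 1 := by
    have := Real.log_two_lt_d9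
    linarith
  refine ⟨K / Real.log 2, div_pos hKpos hlog2, ?_⟩
  intro ω α φ hdio hαmem hper hol N hN x
  obtain ⟨hα, hα1⟩ := hαmem
  set Hs : ℝ := holderSemi α φ with hHs_def
  obtain ⟨hHs, hH⟩ := holder_bound hper hol hα
  have hcont : Continuous φ := continuous_of_holder hα hHs hH
  set I : ℝ := ∫ t in (0:ℝ)..1, φ t with hI
  have hNR : (0:ℝ) < N := by
    have : (0:ℕ) < N := by omega
    exact_mod_cast this
  have hN2 : (2:ℝ) ≤ N := by exact_mod_cast hN
  have hN0 : (N:ℝ) ≠ 0 := hNR.ne'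
  have hαA : α/A < 1 := by rw [div_lt_one hA0]; linarith
  have hαA0 : 0 < α/A := div_pos hα hA0
  -- main estimate
  have hmain := main_induction γ A hγ hA hdio hα hα1 hper hcont hHs hH N x
  -- algebra: (1/N) * (N^(1-α/A)) = (N^(α/A))⁻¹
  have hNs : (1/(N:ℝ)) * ((N:ℝ) ^ (1 - α/A)) = ((N:ℝ) ^ (α/A))⁻¹ := by
    rw [show (1 - α/A) = 1 + (-(α/A)) by ring, Real.rpow_add hNR, Real.rpow_one,
      Real.rpow_neg hNR.le]
    field_simp
  have heq : (1 / (N:ℝ)) * birkhoff φ ω N x - I = (1/(N:ℝ)) * (birkhoff φ ω N x - N * I) := by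
    field_simp
  have hstep : |(1 / (N:ℝ)) * birkhoff φ ω N x - I| ≤ K * Hs * ((N:ℝ) ^ (α/A))⁻¹ := by
    rw [heq, abs_mul, abs_of_pos (by positivity : (0:ℝ) < 1/(N:ℝ))]
    calc (1/(N:ℝ)) * |birkhoff φ ω N x - N * I|
        ≤ (1/(N:ℝ)) * (K * Hs * (N:ℝ) ^ (1 - α/A)) :=
          mul_le_mul_of_nonneg_left hmain (by positivity)
      _ = K * Hs * ((1/(N:ℝ)) * ((N:ℝ) ^ (1 - α/A))) := by ring
      _ = K * Hs * ((N:ℝ) ^ (α/A))⁻¹ := by rw [hNs]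
  -- compare with target
  have hlogN : Real.log 2 ≤ Real.log N := Real.log_le_log two_pos hN2
  have hlogpow : Real.log 2 ≤ Real.log (N:ℝ) ^ (α/A) := by
    have h1 : Real.log 2 ^ (1:ℝ) ≤ Real.log 2 ^ (α/A) :=
      Real.rpow_le_rpow_of_exponent_ge hlog2 hlog2le1 (by linarith)
    rw [Real.rpow_one] at h1
    refine h1.trans ?_
    exact Real.rpow_le_rpow hlog2.le hlogN hαA0.le
  have hHs_le : Hs ≤ holderNorm α φ := by
    rw [holderNorm]
    have := supNorm_nonneg φ
    linarith
  have hnorm_nonneg : 0 ≤ holderNorm α φ := le_trans hHs hHs_le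
  have hnum : K * Hs ≤ (K / Real.log 2) * holderNorm α φ * Real.log (N:ℝ) ^ (α/A) := by
    have h1 : K * Hs = (K / Real.log 2) * (Hs * Real.log 2) := by
      field_simp
    rw [h1]
    have h2 : Hs * Real.log 2 ≤ holderNorm α φ * Real.log (N:ℝ) ^ (α/A) :=
      mul_le_mul hHs_le hlogpow hlog2.le hnorm_nonneg
    calc (K / Real.log 2) * (Hs * Real.log 2)
        ≤ (K / Real.log 2) * (holderNorm α φ * Real.log (N:ℝ) ^ (α/A)) :=
          mul_le_mul_of_nonneg_left h2 (by positivity)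
      _ = (K / Real.log 2) * holderNorm α φ * Real.log (N:ℝ) ^ (α/A) := by ring
  refine hstep.trans ?_
  have hNpow : (0:ℝ) < (N:ℝ) ^ (α/A) := Real.rpow_pos_of_pos hNR _
  rw [div_eq_mul_inv]
  exact mul_le_mul_of_nonneg_right hnum (by positivity)
end
end
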